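/- arXiv:1508.04706 — 6 statements merged into one kernel-verified Lean document; each statement's English description precedes it below -/
import Mathlib

section
/- Let B ∈ L¹(a₁,a₂) be real-valued with B(x) ≥ 0 a.e., let ν₁ ∈ [0,∞), ν₂ ∈ (0,∞], |ν₁| + |1/ν₂| ≠ 0. If ω ∈ ℂ, ω ≠ 0, and y ∈ W^{2,1}[a₁,a₂] is a nontrivial solution of y'' = -ω² B y with boundary conditions y'(a₁) = -iω ν₁ y(a₁) and y'(a₂) = iω ν₂ y(a₂), then Im ω < 0. -/
open MeasureTheory Set

/-- `IsMode a₁ a₂ B ν₁ μ₂ ω y g` : `y` is a nontrivial `W^{2,1}` solution (with derivative `g`)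
of `y'' = -ω² B y` on `(a₁,a₂)` satisfying the radiation boundary conditions
`y'(a₁) = -i ω ν₁ y(a₁)` and `μ₂ y'(a₂) = i ω y(a₂)`, where `μ₂ = 1/ν₂` (so `μ₂ = 0`
encodes `ν₂ = ∞`, i.e. the Dirichlet condition `y(a₂) = 0` when `ω ≠ 0`). -/
def IsMode (a₁ a₂ : ℝ) (B : ℝ → ℝ) (ν₁ μ₂ : ℝ) (ω : ℂ) (y g : ℝ → ℂ) : Prop :=
  ContinuousOn y (Set.Icc a₁ a₂) ∧ ContinuousOn g (Set.Icc a₁ a₂) ∧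
  MeasureTheory.IntegrableOn (fun t => (B t : ℂ) * y t) (Set.Icc a₁ a₂) ∧
  (∀ x ∈ Set.Icc a₁ a₂, y x = y a₁ + ∫ t in a₁..x, g t) ∧
  (∀ x ∈ Set.Icc a₁ a₂, g x = g a₁ + ∫ t in a₁..x, -(ω ^ 2) * (B t : ℂ) * y t) ∧
  g a₁ = -Complex.I * ω * (ν₁ : ℂ) * y a₁ ∧
  (μ₂ : ℂ) * g a₂ = Complex.I * ω * y a₂ ∧
  ∃ x ∈ Set.Icc a₁ a₂, y x ≠ 0

/-- `ω` is a quasi-eigenvalue of the structure `B`. -/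
def IsQuasiEigenvalue (a₁ a₂ : ℝ) (B : ℝ → ℝ) (ν₁ μ₂ : ℝ) (ω : ℂ) : Prop :=
  ω ≠ 0 ∧ ∃ y g : ℝ → ℂ, IsMode a₁ a₂ B ν₁ μ₂ ω y g

open scoped ComplexConjugate
open Complex (I normSq)

/-!
Multiplying `y'' = -ω² B y` by `ȳ` and integrating by parts (for primitives of integrable
functions this is Fubini on a triangle) gives
`-ω² ∫ B |y|² + ∫ |y'|² = y'(a₂) ȳ(a₂) - y'(a₁) ȳ(a₁) = i ω R`,
where the boundary conditions give `R = ν₁ |y(a₁)|² + μ₂ |y'(a₂)|² / |ω|² ≥ 0`.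
The imaginary part of this identity times `ω̄` reads `|ω|² R = -Im ω (|ω|² ∫ B |y|² + ∫ |y'|²)`,
so `Im ω < 0` as soon as `R > 0`. If `R = 0`, then `y` and `y'` vanish together at an endpoint,
and uniqueness for the Cauchy problem forces `y = 0`. Since `B` is only integrable, uniqueness is
a contraction argument: `sup ‖y‖ ≤ sup ‖y‖ / 2` on every subinterval of length at most
`1 / (2 (∫ ‖ω² B‖ + 1))`.
-/

section Primitive

variable {E : Type*} [NormedAddCommGroup E] [NormedSpace ℝ E] {a b : ℝ} {u f : ℝ → E}

lemma eq_add_integral_of_mem_Icc (hf : IntegrableOn f (Icc a b))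
    (hu : ∀ x ∈ Icc a b, u x = u a + ∫ t in a..x, f t) {p x : ℝ} (hp : p ∈ Icc a b)
    (hx : x ∈ Icc a b) : u x = u p + ∫ t in p..x, f t := by
  have hI : ∀ {s}, s ∈ Icc a b → IntervalIntegrable f volume a s := fun hs =>
    (hf.mono_set (uIcc_subset_Icc ⟨le_rfl, hs.1.trans hs.2⟩ hs)).intervalIntegrable
  rw [hu x hx, hu p hp, ← intervalIntegral.integral_interval_sub_left (hI hx) (hI hp)]
  abel

end Primitive

section Uniqueness

variable {E : Type*} [NormedAddCommGroup E] [NormedSpace ℂ E] {a b : ℝ} {q : ℝ → ℂ}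
  {y g : ℝ → E}

lemma eq_zero_of_eq_zero_of_mul_abs_sub_le (hq : IntegrableOn q (Icc a b))
    (hy : ContinuousOn y (Icc a b)) (hg : IntegrableOn g (Icc a b))
    (hy_eq : ∀ x ∈ Icc a b, y x = y a + ∫ t in a..x, g t)
    (hg_eq : ∀ x ∈ Icc a b, g x = g a + ∫ t in a..x, q t • y t)
    {p x : ℝ} (hp : p ∈ Icc a b) (hx : x ∈ Icc a b)
    (hpx : (∫ t in Icc a b, ‖q t‖) * |x - p| ≤ 1 / 2) (hyp : y p = 0) (hgp : g p = 0) :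
    y x = 0 ∧ g x = 0 := by
  have hsub : uIcc p x ⊆ Icc a b := uIcc_subset_Icc hp hx
  have hqy : IntegrableOn (fun t => q t • y t) (Icc a b) :=
    hq.smul_continuousOn hy isCompact_Icc
  set β := ∫ t in Icc a b, ‖q t‖
  obtain ⟨z₀, hz₀, hmax⟩ :=
    isCompact_uIcc.exists_isMaxOn nonempty_uIcc ((hy.mono hsub).norm)
  set M := ‖y z₀‖
  have hIoc : ∀ z ∈ uIcc p x, uIoc p z ⊆ uIcc p x := fun z hz =>
    uIoc_subset_uIcc.trans (uIcc_subset_uIcc_left hz)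
  have hg_le : ∀ z ∈ uIcc p x, ‖g z‖ ≤ β * M := by
    intro z hz
    have hpz : uIoc p z ⊆ Icc a b := (hIoc z hz).trans hsub
    rw [eq_add_integral_of_mem_Icc hqy hg_eq hp (hsub hz), hgp, zero_add]
    calc ‖∫ t in p..z, q t • y t‖ ≤ ∫ t in uIoc p z, ‖q t • y t‖ :=
          intervalIntegral.norm_integral_le_integral_norm_uIoc
      _ ≤ ∫ t in uIoc p z, ‖q t‖ * M := by
          refine setIntegral_mono_on (hqy.mono_set hpz).norm
            ((hq.mono_set hpz).norm.mul_const _) measurableSet_uIoc fun t ht => ?_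
          rw [norm_smul]
          gcongr
          exact hmax (hIoc z hz ht)
      _ ≤ ∫ t in Icc a b, ‖q t‖ * M :=
          setIntegral_mono_set (hq.norm.mul_const _)
            (ae_of_all _ fun t => by positivity) hpz.eventuallyLE
      _ = β * M := integral_mul_const _ _
  have hy_le : ∀ z ∈ uIcc p x, ‖y z‖ ≤ M / 2 := by
    intro z hz
    rw [eq_add_integral_of_mem_Icc hg hy_eq hp (hsub hz), hyp, zero_add]
    calc ‖∫ t in p..z, g t‖ ≤ β * M * |z - p| :=
          intervalIntegral.norm_integral_le_of_norm_le_const fun t ht => hg_le t (hIoc z hz ht)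
      _ ≤ β * M * |x - p| := by
          have : 0 ≤ β := integral_nonneg fun _ => norm_nonneg _
          exact mul_le_mul_of_nonneg_left (abs_sub_left_of_mem_uIcc hz) (by positivity)
      _ = M * (β * |x - p|) := by ring
      _ ≤ M * (1 / 2) := by gcongr
      _ = M / 2 := by ring
  have hy0 : ∀ z ∈ uIcc p x, y z = 0 := fun z hz =>
    norm_le_zero_iff.mp ((hmax hz).trans (by linarith [hy_le z₀ hz₀]))
  refine ⟨hy0 x right_mem_uIcc, ?_⟩
  rw [eq_add_integral_of_mem_Icc hqy hg_eq hp hx, hgp, zero_add,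
    intervalIntegral.integral_congr (g := fun _ => 0) fun t ht => by simp [hy0 t ht]]
  simp

lemma abs_sub_le_of_abs_sub_le_succ_mul {c x δ : ℝ} {n : ℕ} (h : |x - c| ≤ (n + 1) * δ) :
    |c + n / (n + 1) * (x - c) - c| ≤ n * δ ∧ |x - (c + n / (n + 1) * (x - c))| ≤ δ := by
  have hpc : c + n / (n + 1) * (x - c) - c = n / (n + 1) * (x - c) := by ring
  have hxp : x - (c + n / (n + 1) * (x - c)) = 1 / (n + 1) * (x - c) := by
    field_simp; ring
  rw [hpc, hxp, abs_mul, abs_mul, abs_of_nonneg (by positivity : (0 : ℝ) ≤ n / (n + 1)),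
    abs_of_pos (by positivity : (0 : ℝ) < 1 / (n + 1))]
  constructor
  · calc n / (n + 1) * |x - c| ≤ n / (n + 1) * ((n + 1) * δ) := by gcongr
      _ = n * δ := by field_simp
  · calc 1 / (n + 1) * |x - c| ≤ 1 / (n + 1) * ((n + 1) * δ) := by gcongr
      _ = δ := by field_simp

theorem eqOn_zero_of_cauchy_data_eq_zero (hq : IntegrableOn q (Icc a b))
    (hy : ContinuousOn y (Icc a b)) (hg : IntegrableOn g (Icc a b))
    (hy_eq : ∀ x ∈ Icc a b, y x = y a + ∫ t in a..x, g t)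
    (hg_eq : ∀ x ∈ Icc a b, g x = g a + ∫ t in a..x, q t • y t)
    {c : ℝ} (hc : c ∈ Icc a b) (hyc : y c = 0) (hgc : g c = 0) : EqOn y 0 (Icc a b) := by
  set β := ∫ t in Icc a b, ‖q t‖
  have hβ : 0 ≤ β := integral_nonneg fun _ => norm_nonneg _
  set δ := 1 / (2 * (β + 1))
  have hδ : 0 < δ := by positivity
  have hβδ : β * δ ≤ 1 / 2 := by
    rw [mul_one_div, div_le_div_iff₀ (by positivity) two_pos]
    linarith
  have hnear : ∀ n : ℕ, ∀ x ∈ Icc a b, |x - c| ≤ n * δ → y x = 0 ∧ g x = 0 := by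
    intro n
    induction n with
    | zero =>
      intro x _ hxc
      obtain rfl : x = c := by simpa [sub_eq_zero] using hxc
      exact ⟨hyc, hgc⟩
    | succ n ih =>
      intro x hx hxc
      have ht : (n / (n + 1) : ℝ) ∈ Icc (0 : ℝ) 1 :=
        ⟨by positivity, (div_le_one (by positivity)).mpr (by linarith)⟩
      have hp := (convex_Icc a b).add_smul_sub_mem hc hx ht
      rw [smul_eq_mul] at hp
      push_cast at hxc
      obtain ⟨hpc, hxp⟩ := abs_sub_le_of_abs_sub_le_succ_mul hxc
      obtain ⟨hyp, hgp⟩ := ih _ hp hpc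
      refine eq_zero_of_eq_zero_of_mul_abs_sub_le hq hy hg hy_eq hg_eq hp hx ?_ hyp hgp
      exact (mul_le_mul_of_nonneg_left hxp hβ).trans hβδ
  obtain ⟨n, hn⟩ := exists_nat_ge ((b - a) / δ)
  intro x hx
  refine (hnear n x hx ?_).1
  rw [div_le_iff₀ hδ] at hn
  rw [abs_sub_le_iff]
  constructor <;> linarith [hx.1, hx.2, hc.1, hc.2]

end Uniqueness

section IntegrationByParts

variable {𝕜 : Type*} [RCLike 𝕜] {a b : ℝ} {f k : ℝ → 𝕜}

theorem integral_mul_primitive_eq_integral_integral_mul (hab : a ≤ b)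
    (hf : IntegrableOn f (Icc a b)) (hk : IntegrableOn k (Icc a b)) :
    ∫ x in a..b, f x * ∫ t in a..x, k t = ∫ t in a..b, (∫ x in t..b, f x) * k t := by
  -- both sides integrate `f x * k t` over the triangle `a < t ≤ x ≤ b`
  set μ := volume.restrict (Ioc a b)
  set F := {p : ℝ × ℝ | p.2 ≤ p.1}.indicator fun p => f p.1 * k p.2
  have hF : Integrable F (μ.prod μ) :=
    ((hf.mono_set Ioc_subset_Icc_self).mul_prod (hk.mono_set Ioc_subset_Icc_self)).indicator
      (measurableSet_le measurable_snd measurable_fst)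
  have hinner : ∀ x ∈ Ioc a b, f x * (∫ t in a..x, k t) = ∫ t, F (x, t) ∂μ := by
    intro x hx
    have hset : Iic x ∩ Ioc a b = Ioc a x := by
      ext t; simp only [mem_inter_iff, mem_Iic, mem_Ioc]
      exact ⟨fun h => ⟨h.2.1, h.1⟩, fun h => ⟨h.2, h.1, h.2.trans hx.2⟩⟩
    have hFx : (fun t => F (x, t)) = (Iic x).indicator fun t => f x * k t := by
      ext t; by_cases h : t ≤ x <;> simp [F, h]
    rw [hFx, integral_indicator measurableSet_Iic, Measure.restrict_restrict measurableSet_Iic,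
      hset, integral_const_mul, intervalIntegral.integral_of_le hx.1.le]
  have houter : ∀ t ∈ Ioc a b, (∫ x in t..b, f x) * k t = ∫ x, F (x, t) ∂μ := by
    intro t ht
    have hset : Ici t ∩ Ioc a b = Icc t b := by
      ext x; simp only [mem_inter_iff, mem_Ici, mem_Ioc, mem_Icc]
      exact ⟨fun h => ⟨h.1, h.2.2⟩, fun h => ⟨h.1, ht.1.trans_le h.1, h.2⟩⟩
    have hFt : (fun x => F (x, t)) = (Ici t).indicator fun x => f x * k t := by
      ext x; by_cases h : t ≤ x <;> simp [F, h]
    rw [hFt, integral_indicator measurableSet_Ici, Measure.restrict_restrict measurableSet_Ici,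
      hset, integral_mul_const, integral_Icc_eq_integral_Ioc, intervalIntegral.integral_of_le ht.2]
  rw [intervalIntegral.integral_of_le hab, intervalIntegral.integral_of_le hab,
    setIntegral_congr_fun measurableSet_Ioc hinner, setIntegral_congr_fun measurableSet_Ioc houter]
  exact integral_integral_swap hF

theorem integral_mul_primitive_add_primitive_mul (hab : a ≤ b)
    (hf : IntegrableOn f (Icc a b)) (hk : IntegrableOn k (Icc a b)) :
    ∫ x in a..b, (f x * (∫ t in a..x, k t) + (∫ t in a..x, f t) * k x) =
      (∫ x in a..b, f x) * ∫ x in a..b, k x := by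
  have hf' : IntegrableOn f (uIcc a b) := by rwa [uIcc_of_le hab]
  have hk' : IntegrableOn k (uIcc a b) := by rwa [uIcc_of_le hab]
  have hfK : IntervalIntegrable (fun x => f x * ∫ t in a..x, k t) volume a b :=
    hf'.intervalIntegrable.mul_continuousOn (intervalIntegral.continuousOn_primitive_interval hk')
  have hFk : IntervalIntegrable (fun x => (∫ t in a..x, f t) * k x) volume a b :=
    hk'.intervalIntegrable.continuousOn_mul (intervalIntegral.continuousOn_primitive_interval hf')
  have hf_sub : ∀ t ∈ uIcc a b, ∫ x in t..b, f x = (∫ x in a..b, f x) - ∫ x in a..t, f x :=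
    fun t ht => (intervalIntegral.integral_interval_sub_left hf'.intervalIntegrable
      (hf'.mono_set (uIcc_subset_uIcc_left ht)).intervalIntegrable).symm
  rw [intervalIntegral.integral_add hfK hFk,
    integral_mul_primitive_eq_integral_integral_mul hab hf hk,
    intervalIntegral.integral_congr fun t ht => by rw [hf_sub t ht, sub_mul],
    intervalIntegral.integral_sub (hk'.intervalIntegrable.const_mul _) hFk,
    intervalIntegral.integral_const_mul, sub_add_cancel]

theorem integral_mul_add_mul_eq_sub_of_eq_add_integral (hab : a ≤ b)
    (hf : IntegrableOn f (Icc a b)) (hk : IntegrableOn k (Icc a b)) {u v : ℝ → 𝕜}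
    (hu : ∀ x ∈ Icc a b, u x = u a + ∫ t in a..x, f t)
    (hv : ∀ x ∈ Icc a b, v x = v a + ∫ t in a..x, k t) :
    ∫ x in a..b, (f x * v x + u x * k x) = u b * v b - u a * v a := by
  have hf' : IntegrableOn f (uIcc a b) := by rwa [uIcc_of_le hab]
  have hk' : IntegrableOn k (uIcc a b) := by rwa [uIcc_of_le hab]
  have hfv : IntervalIntegrable (fun x => f x * v a) volume a b :=
    hf'.intervalIntegrable.mul_const _
  have huk : IntervalIntegrable (fun x => u a * k x) volume a b :=
    hk'.intervalIntegrable.const_mul _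
  have hfK : IntervalIntegrable (fun x => f x * ∫ t in a..x, k t) volume a b :=
    hf'.intervalIntegrable.mul_continuousOn (intervalIntegral.continuousOn_primitive_interval hk')
  have hFk : IntervalIntegrable (fun x => (∫ t in a..x, f t) * k x) volume a b :=
    hk'.intervalIntegrable.continuousOn_mul (intervalIntegral.continuousOn_primitive_interval hf')
  have hb : b ∈ Icc a b := ⟨hab, le_rfl⟩
  rw [intervalIntegral.integral_congr (g := fun x => f x * v a + u a * k x +
      (f x * (∫ t in a..x, k t) + (∫ t in a..x, f t) * k x)) fun x hx => by
        rw [uIcc_of_le hab] at hx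
        simp only [hu x hx, hv x hx]
        ring,
    intervalIntegral.integral_add (hfv.add huk) (hfK.add hFk),
    intervalIntegral.integral_add hfv huk, intervalIntegral.integral_mul_const,
    intervalIntegral.integral_const_mul, integral_mul_primitive_add_primitive_mul hab hf hk,
    hu b hb, hv b hb]
  ring

end IntegrationByParts

theorem Complex.im_neg_of_neg_sq_mul_add_eq_I_mul {ω : ℂ} (hω : ω ≠ 0) {P Q R : ℝ}
    (hP : 0 ≤ P) (hQ : 0 ≤ Q) (hR : 0 < R) (h : -(ω ^ 2) * P + Q = I * ω * R) : ω.im < 0 := by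
  have hre := congrArg Complex.re h
  have him := congrArg Complex.im h
  simp only [Complex.add_re, Complex.add_im, Complex.neg_re, Complex.neg_im, Complex.mul_re,
    Complex.mul_im, Complex.ofReal_re, Complex.ofReal_im, Complex.I_re, Complex.I_im, sq] at hre him
  have hnormSq : 0 < normSq ω := Complex.normSq_pos.mpr hω
  rw [Complex.normSq_apply] at hnormSq
  -- the imaginary part of `h * conj ω`
  have key : (ω.re * ω.re + ω.im * ω.im) * R =
      -ω.im * ((ω.re * ω.re + ω.im * ω.im) * P + Q) := by
    linear_combination -ω.re * him + ω.im * hre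
  by_contra! hτ
  nlinarith [mul_pos hnormSq hR, mul_nonneg hτ (add_nonneg (mul_nonneg hnormSq.le hP) hQ)]

namespace IsMode

variable {a₁ a₂ : ℝ} {B : ℝ → ℝ} {ν₁ μ₂ : ℝ} {ω : ℂ} {y g : ℝ → ℂ}

theorem energy_identity (h : IsMode a₁ a₂ B ν₁ μ₂ ω y g) (h12 : a₁ ≤ a₂) :
    -(ω ^ 2) * ((∫ x in a₁..a₂, B x * normSq (y x) : ℝ) : ℂ) +
        ((∫ x in a₁..a₂, normSq (g x) : ℝ) : ℂ) =
      g a₂ * conj (y a₂) - g a₁ * conj (y a₁) := by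
  obtain ⟨hy, hg, hBy, hy_eq, hg_eq, -⟩ := h
  have hf : IntegrableOn (fun t => -(ω ^ 2) * (B t : ℂ) * y t) (Icc a₁ a₂) := by
    have := hBy.const_mul (-(ω ^ 2))
    simp only [← mul_assoc] at this
    exact this
  have hyc : ContinuousOn (fun x => conj (y x)) (Icc a₁ a₂) :=
    Complex.continuous_conj.comp_continuousOn hy
  have hgc : ContinuousOn (fun x => conj (g x)) (Icc a₁ a₂) :=
    Complex.continuous_conj.comp_continuousOn hg
  have hv : ∀ x ∈ Icc a₁ a₂, conj (y x) = conj (y a₁) + ∫ t in a₁..x, conj (g t) := by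
    intro x hx
    rw [intervalIntegral.intervalIntegral_conj, ← map_add, ← hy_eq x hx]
  have hfy : IntervalIntegrable (fun x => -(ω ^ 2) * (B x : ℂ) * y x * conj (y x)) volume a₁ a₂ :=
    (intervalIntegrable_iff_integrableOn_Icc_of_le h12).mpr
      (hf.mul_continuousOn hyc isCompact_Icc)
  have hgg : IntervalIntegrable (fun x => g x * conj (g x)) volume a₁ a₂ :=
    (intervalIntegrable_iff_integrableOn_Icc_of_le h12).mpr (hg.mul hgc).integrableOn_Icc
  rw [← integral_mul_add_mul_eq_sub_of_eq_add_integral h12 hf hgc.integrableOn_Icc hg_eq hv,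
    intervalIntegral.integral_add hfy hgg,
    ← intervalIntegral.integral_ofReal, ← intervalIntegral.integral_ofReal,
    ← intervalIntegral.integral_const_mul]
  congr 1 <;> refine intervalIntegral.integral_congr fun x _ => ?_
  · simp only [Complex.ofReal_mul, ← Complex.mul_conj]
    ring
  · simp only [← Complex.mul_conj]

theorem boundary_term (h : IsMode a₁ a₂ B ν₁ μ₂ ω y g) (hω : ω ≠ 0) :
    g a₂ * conj (y a₂) - g a₁ * conj (y a₁) =
      I * ω * ((ν₁ * normSq (y a₁) + μ₂ * normSq (g a₂) / normSq ω : ℝ) : ℂ) := by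
  obtain ⟨-, -, -, -, -, hbc₁, hbc₂, -⟩ := h
  have hbc₂_conj : I * μ₂ * conj (g a₂) = conj ω * conj (y a₂) := by
    have := congrArg conj hbc₂
    simp only [map_mul, Complex.conj_ofReal, Complex.conj_I] at this
    linear_combination I * this - conj ω * conj (y a₂) * Complex.I_sq
  have hωc : conj ω ≠ 0 := (map_ne_zero _).mpr hω
  have hflux₂ : I * ω * (μ₂ * (g a₂ * conj (g a₂)) / (ω * conj ω)) = g a₂ * conj (y a₂) :=
    calc I * ω * (μ₂ * (g a₂ * conj (g a₂)) / (ω * conj ω))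
        = g a₂ * (I * μ₂ * conj (g a₂)) / conj ω := by field_simp
      _ = g a₂ * conj (y a₂) := by rw [hbc₂_conj]; field_simp
  push_cast
  rw [← Complex.mul_conj, ← Complex.mul_conj, ← Complex.mul_conj, hbc₁]
  linear_combination -hflux₂

theorem eqOn_zero (h : IsMode a₁ a₂ B ν₁ μ₂ ω y g) (hBint : IntegrableOn B (Icc a₁ a₂))
    {c : ℝ} (hc : c ∈ Icc a₁ a₂) (hyc : y c = 0) (hgc : g c = 0) : EqOn y 0 (Icc a₁ a₂) := by
  obtain ⟨hy, hg, -, hy_eq, hg_eq, -⟩ := h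
  exact eqOn_zero_of_cauchy_data_eq_zero (q := fun t => -(ω ^ 2) * (B t : ℂ))
    (hBint.ofReal.const_mul _) hy hg.integrableOn_Icc hy_eq hg_eq hc hyc hgc

theorem boundary_weight_pos (h : IsMode a₁ a₂ B ν₁ μ₂ ω y g) (h12 : a₁ ≤ a₂)
    (hBint : IntegrableOn B (Icc a₁ a₂)) (hω : ω ≠ 0) (hν₁ : 0 ≤ ν₁) (hμ₂ : 0 ≤ μ₂)
    (hne : ¬(ν₁ = 0 ∧ μ₂ = 0)) :
    0 < ν₁ * normSq (y a₁) + μ₂ * normSq (g a₂) / normSq ω := by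
  have h₁ : 0 ≤ ν₁ * normSq (y a₁) := mul_nonneg hν₁ (Complex.normSq_nonneg _)
  have h₂ : 0 ≤ μ₂ * normSq (g a₂) / normSq ω :=
    div_nonneg (mul_nonneg hμ₂ (Complex.normSq_nonneg _)) (Complex.normSq_nonneg _)
  refine lt_of_le_of_ne (add_nonneg h₁ h₂) fun hzero => ?_
  obtain ⟨hbc₁, hbc₂, x₀, hx₀, hyx₀⟩ := h.2.2.2.2.2
  have hvanish : ∃ c ∈ Icc a₁ a₂, y c = 0 ∧ g c = 0 := by
    rcases not_and_or.mp hne with hν₁0 | hμ₂0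
    · have hy₁ : y a₁ = 0 := by
        simpa [hν₁0] using (mul_eq_zero.mp (by linarith : ν₁ * normSq (y a₁) = 0))
      exact ⟨a₁, ⟨le_rfl, h12⟩, hy₁, by rw [hbc₁, hy₁, mul_zero]⟩
    · have hg₂ : g a₂ = 0 := by
        have : μ₂ * normSq (g a₂) = 0 := by
          simpa [Complex.normSq_eq_zero, hω] using (by linarith : μ₂ * normSq (g a₂) / normSq ω = 0)
        simpa [hμ₂0] using this
      have hy₂ : y a₂ = 0 := by
        simpa [hg₂, hω, Complex.I_ne_zero] using hbc₂.symm
      exact ⟨a₂, ⟨h12, le_rfl⟩, hy₂, hg₂⟩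
  obtain ⟨c, hc, hyc, hgc⟩ := hvanish
  exact hyx₀ (h.eqOn_zero hBint hc hyc hgc hx₀)

end IsMode

/-- Quasi-eigenvalues of a nonnegative structure lie in the open lower half-plane. -/
theorem stmt1 (a₁ a₂ : ℝ) (h12 : a₁ < a₂) (B : ℝ → ℝ)
    (hBint : MeasureTheory.IntegrableOn B (Set.Icc a₁ a₂))
    (hB0 : ∀ᵐ x ∂(MeasureTheory.volume.restrict (Set.Icc a₁ a₂)), 0 ≤ B x)
    (ν₁ μ₂ : ℝ) (hν₁ : 0 ≤ ν₁) (hμ₂ : 0 ≤ μ₂) (hne : ¬(ν₁ = 0 ∧ μ₂ = 0))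
    (ω : ℂ) (hω : ω ≠ 0) (y g : ℝ → ℂ)
    (hmode : IsMode a₁ a₂ B ν₁ μ₂ ω y g) :
    ω.im < 0 := by
  have hP : 0 ≤ ∫ x in a₁..a₂, B x * normSq (y x) :=
    intervalIntegral.integral_nonneg_of_ae_restrict h12.le <| by
      filter_upwards [hB0] with x hx using mul_nonneg hx (Complex.normSq_nonneg _)
  have hQ : 0 ≤ ∫ x in a₁..a₂, normSq (g x) :=
    intervalIntegral.integral_nonneg h12.le fun _ _ => Complex.normSq_nonneg _
  exact Complex.im_neg_of_neg_sq_mul_add_eq_I_mul hω hP hQ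
    (hmode.boundary_weight_pos h12.le hBint hω hν₁ hμ₂ hne)
    ((hmode.energy_identity h12.le).trans (hmode.boundary_term hω))
end

section
/- Let B ≡ b with constant b > 0, b^{1/2} ∉ {ν₁, ν₂}, and suppose K₁ ≠ 1, where K₁ = (1+ν₁/ν₂)/(ν₁/√b + √b/ν₂). Then the quasi-eigenvalues of B on (a₁,a₂) are exactly ωₙ = -(i/(2√b(a₂-a₁))) ln|(1+K₁)/(1-K₁)| + (π/(√b(a₂-a₁)))·m, where m = n if √b ∉ [ν₁,ν₂] and m = n + 1/2 if √b ∈ (ν₁,ν₂), for n ∈ ℤ. -/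
open MeasureTheory Set

/-- `K1 ν₁ μ₂ b = (1 + ν₁/ν₂)/(ν₁/√b + √b/ν₂)` written with `μ₂ = 1/ν₂` (so `μ₂ = 0`
encodes `ν₂ = ∞`, consistent with the convention `1/∞ = 0`). -/
noncomputable def K1 (ν₁ μ₂ b : ℝ) : ℝ :=
  (1 + ν₁ * μ₂) / (ν₁ / Real.sqrt b + Real.sqrt b * μ₂)

/-! For constant `b` every solution of `y'' = -ω² b y` is a combination of `cos` and `sin` of
`ω √b (x - a₁)`. The left boundary condition fixes a mode up to a scalar, and the right one then
becomes `sin z + i K₁ cos z = 0` with `z = ω √b (a₂ - a₁)`, i.e.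
`exp (2 i z) = (1 + K₁) / (1 - K₁)`. Since `K₁ - 1 = (1 - ν₁/√b) (1 - √b/ν₂) / (ν₁/√b + √b/ν₂)`
and `ν₁ ≤ ν₂`, this real number is negative exactly when `√b ∈ (ν₁, ν₂)`, and taking logarithms
gives the listed `ω`. -/

open Complex Topology

section IntegralEquation

variable {E : Type*} [NormedAddCommGroup E] [NormedSpace ℝ E] [CompleteSpace E] {a b : ℝ}

theorem hasDerivWithinAt_Ici_of_eq_add_integral {f F : ℝ → E} {C : E}
    (hf : ContinuousOn f (Icc a b)) (hF : ∀ x ∈ Icc a b, F x = C + ∫ t in a..x, f t)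
    {x : ℝ} (hx : x ∈ Ico a b) : HasDerivWithinAt F (f x) (Ici x) x := by
  have hxb : Icc x b ∈ 𝓝[≥] x := Icc_mem_nhdsGE_of_mem ⟨le_rfl, hx.2⟩
  have hab : Icc a b ∈ 𝓝[≥] x := Filter.mem_of_superset hxb (Icc_subset_Icc_left hx.1)
  have hint : IntervalIntegrable f volume a x :=
    (hf.mono (uIcc_of_le hx.1 ▸ Icc_subset_Icc_right hx.2.le)).intervalIntegrable
  have hmeas : StronglyMeasurableAtFilter f (𝓝[>] x) volume :=
    ⟨Icc x b, nhdsWithin_mono x Ioi_subset_Ici_self hxb,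
      (hf.mono (Icc_subset_Icc_left hx.1)).aestronglyMeasurable measurableSet_Icc⟩
  have hcont : ContinuousWithinAt f (Ioi x) x :=
    ((hf x (Ico_subset_Icc_self hx)).mono_of_mem_nhdsWithin hab).mono Ioi_subset_Ici_self
  exact ((intervalIntegral.integral_hasDerivWithinAt_right hint hmeas hcont).const_add C
    ).congr_of_eventuallyEq (Filter.eventuallyEq_of_mem hab hF) (hF x (Ico_subset_Icc_self hx))

theorem eq_add_integral_of_hasDerivAt {f F : ℝ → E} (hF : ∀ t, HasDerivAt F (f t) t)
    (hf : Continuous f) (a x : ℝ) : F x = F a + ∫ t in a..x, f t := by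
  rw [intervalIntegral.integral_eq_sub_of_hasDerivAt (fun t _ => hF t) (hf.intervalIntegrable _ _),
    add_sub_cancel]

end IntegralEquation

section HarmonicOscillator

variable {a b : ℝ} {c : ℂ}

theorem hasDerivAt_cos_mul_sub (c : ℂ) (a x : ℝ) :
    HasDerivAt (fun u : ℝ => cos (c * (u - a))) (-(c * sin (c * (x - a)))) x := by
  have h : HasDerivAt (fun u : ℝ => c * ((u : ℂ) - a)) c x := by
    simpa using ((hasDerivAt_id (x : ℂ)).sub_const (a : ℂ)).const_mul c |>.comp_ofReal
  exact ((hasDerivAt_cos _).comp x h).congr_deriv (by ring)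

theorem hasDerivAt_sin_mul_sub (c : ℂ) (a x : ℝ) :
    HasDerivAt (fun u : ℝ => sin (c * (u - a))) (c * cos (c * (x - a))) x := by
  have h : HasDerivAt (fun u : ℝ => c * ((u : ℂ) - a)) c x := by
    simpa using ((hasDerivAt_id (x : ℂ)).sub_const (a : ℂ)).const_mul c |>.comp_ofReal
  exact ((hasDerivAt_sin _).comp x h).congr_deriv (by ring)

noncomputable def cosSin (c : ℂ) (a : ℝ) (A B : ℂ) (x : ℝ) : ℂ :=
  A * cos (c * (x - a)) + B * sin (c * (x - a))

@[fun_prop]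
theorem continuous_cosSin (c : ℂ) (a : ℝ) (A B : ℂ) : Continuous (cosSin c a A B) := by
  unfold cosSin; fun_prop

@[simp]
theorem cosSin_self (c : ℂ) (a : ℝ) (A B : ℂ) : cosSin c a A B a = A := by
  simp [cosSin]

theorem hasDerivAt_cosSin (c : ℂ) (a : ℝ) (A B : ℂ) (x : ℝ) :
    HasDerivAt (cosSin c a A B) (cosSin c a (c * B) (-(c * A)) x) x :=
  (((hasDerivAt_cos_mul_sub c a x).const_mul A).add
    ((hasDerivAt_sin_mul_sub c a x).const_mul B)).congr_deriv (by unfold cosSin; ring)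

theorem cosSin_eq_add_integral (c : ℂ) (a : ℝ) (A B : ℂ) (x : ℝ) :
    cosSin c a A B x = A + ∫ t in a..x, cosSin c a (c * B) (-(c * A)) t := by
  simpa using eq_add_integral_of_hasDerivAt (hasDerivAt_cosSin c a A B) (by fun_prop) a x

theorem cosSin_derivative_eq_add_integral (c : ℂ) (a : ℝ) (A B : ℂ) (x : ℝ) :
    cosSin c a (c * B) (-(c * A)) x = c * B + ∫ t in a..x, -c ^ 2 * cosSin c a A B t := by
  have h t : cosSin c a (c * -(c * A)) (-(c * (c * B))) t = -c ^ 2 * cosSin c a A B t := by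
    unfold cosSin; ring
  simpa only [h] using cosSin_eq_add_integral c a (c * B) (-(c * A)) x

theorem eq_cosSin_of_eq_add_integral {y g : ℝ → ℂ} (hy : ContinuousOn y (Icc a b))
    (hg : ContinuousOn g (Icc a b)) (hyi : ∀ x ∈ Icc a b, y x = y a + ∫ t in a..x, g t)
    (hgi : ∀ x ∈ Icc a b, g x = g a + ∫ t in a..x, -c ^ 2 * y t) {x : ℝ} (hx : x ∈ Icc a b) :
    c * y x = cosSin c a (c * y a) (g a) x ∧ g x = cosSin c a (g a) (-(c * y a)) x := by
  have hC (u : ℝ) : HasDerivWithinAt (fun u : ℝ => cos (c * (u - a))) (-(c * sin (c * (u - a))))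
      (Ici u) u := (hasDerivAt_cos_mul_sub c a u).hasDerivWithinAt
  have hS (u : ℝ) : HasDerivWithinAt (fun u : ℝ => sin (c * (u - a))) (c * cos (c * (u - a)))
      (Ici u) u := (hasDerivAt_sin_mul_sub c a u).hasDerivWithinAt
  have hy' u (hu : u ∈ Ico a b) : HasDerivWithinAt y (g u) (Ici u) u :=
    hasDerivWithinAt_Ici_of_eq_add_integral hg hyi hu
  have hg' u (hu : u ∈ Ico a b) : HasDerivWithinAt g (-c ^ 2 * y u) (Ici u) u :=
    hasDerivWithinAt_Ici_of_eq_add_integral (by fun_prop) hgi hu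
  -- rotating `(c y, g)` back by the angle `c (x - a)` gives two constants of motion
  have hE := constant_of_has_deriv_right_zero
    (f := fun u => c * y u * cos (c * (u - a)) - g u * sin (c * (u - a))) (by fun_prop)
    (fun u hu => ((((hy' u hu).const_mul c).mul (hC u)).sub ((hg' u hu).mul (hS u))).congr_deriv
      (by ring)) x hx
  have hF := constant_of_has_deriv_right_zero
    (f := fun u => c * y u * sin (c * (u - a)) + g u * cos (c * (u - a))) (by fun_prop)
    (fun u hu => ((((hy' u hu).const_mul c).mul (hS u)).add ((hg' u hu).mul (hC u))).congr_deriv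
      (by ring)) x hx
  simp only [sub_self, mul_zero, cos_zero, sin_zero, mul_one, sub_zero, zero_add] at hE hF
  have hpyth := cos_sq_add_sin_sq (c * (x - a))
  unfold cosSin
  constructor
  · linear_combination cos (c * (x - a)) * hE + sin (c * (x - a)) * hF - c * y x * hpyth
  · linear_combination -sin (c * (x - a)) * hE + cos (c * (x - a)) * hF - g x * hpyth

end HarmonicOscillator

theorem sin_add_I_mul_mul_cos (K z : ℂ) :
    sin z + I * K * cos z = I / 2 * exp (-z * I) * (1 + K - exp (2 * z * I) * (1 - K)) := by
  have h : exp (2 * z * I) = exp (z * I) * exp (z * I) := by rw [← exp_add]; ring_nf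
  have h' : exp (-z * I) * exp (z * I) = 1 := by rw [← exp_add]; simp
  rw [sin, cos, h]
  linear_combination (I / 2 * (1 - K) * exp (z * I)) * h'

theorem sin_add_I_mul_mul_cos_eq_zero_iff (K z : ℂ) :
    sin z + I * K * cos z = 0 ↔ exp (2 * z * I) * (1 - K) = 1 + K := by
  rw [sin_add_I_mul_mul_cos, mul_eq_zero, or_iff_right (by simp [exp_ne_zero]), sub_eq_zero,
    eq_comm]

theorem exp_two_mul_mul_I_eq_ofReal_iff {R : ℝ} (hR : R ≠ 0) (z : ℂ) :
    exp (2 * z * I) = R ↔ ∃ n : ℤ, z = -(I * ((Real.log |R| / 2 : ℝ) : ℂ)) +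
      ((Real.pi * (if R < 0 then (n : ℝ) + 1 / 2 else n) : ℝ) : ℂ) := by
  have hpolar : (R : ℂ) = exp (Real.log |R| + (if R < 0 then Real.pi else 0) * I) := by
    rw [exp_add, ← ofReal_exp, Real.exp_log (abs_pos.2 hR)]
    split_ifs with h
    · simp [abs_of_neg h]
    · simp [abs_of_nonneg (not_lt.1 h)]
  rw [hpolar, exp_eq_exp_iff_exists_int]
  refine exists_congr fun n => ?_
  split_ifs <;> push_cast <;> constructor <;> intro h
  · linear_combination (-I / 2) * h + (z - Real.pi / 2 - n * Real.pi) * I_sq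
  · linear_combination 2 * I * h - Real.log |R| * I_sq
  · linear_combination (-I / 2) * h + (z - n * Real.pi) * I_sq
  · linear_combination 2 * I * h - Real.log |R| * I_sq

section K1

variable {ν₁ μ₂ b : ℝ}

theorem K1_denom_pos (hν₁ : 0 ≤ ν₁) (hμ₂ : 0 ≤ μ₂) (hne : ¬(ν₁ = 0 ∧ μ₂ = 0)) (hb : 0 < b) :
    0 < ν₁ / √b + √b * μ₂ := by
  have hs : 0 < √b := Real.sqrt_pos.2 hb
  rcases hν₁.eq_or_lt with rfl | hν₁
  · have hμ₂ : 0 < μ₂ := hμ₂.lt_of_ne fun h => hne ⟨rfl, h.symm⟩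
    positivity
  · positivity

theorem K1_sub_one (hb : 0 < b) (hD : ν₁ / √b + √b * μ₂ ≠ 0) :
    K1 ν₁ μ₂ b - 1 = (1 - ν₁ / √b) * (1 - √b * μ₂) / (ν₁ / √b + √b * μ₂) := by
  have hs : √b ≠ 0 := (Real.sqrt_pos.2 hb).ne'
  rw [K1, div_sub_one hD]
  field_simp
  ring

theorem one_lt_K1_iff (hle : ν₁ * μ₂ ≤ 1) (hb : 0 < b) (hD : 0 < ν₁ / √b + √b * μ₂) :
    1 < K1 ν₁ μ₂ b ↔ ν₁ < √b ∧ √b * μ₂ < 1 := by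
  have hs : 0 < √b := Real.sqrt_pos.2 hb
  rw [← sub_pos, K1_sub_one hb hD.ne', div_pos_iff_of_pos_right hD, mul_pos_iff, sub_pos,
    sub_pos, div_lt_one hs, or_iff_left]
  rintro ⟨h₁, h₂⟩
  rw [sub_neg, one_lt_div hs] at h₁
  rw [sub_neg] at h₂
  have hμ₂ : 0 < μ₂ := pos_of_mul_pos_right (h₂.trans' one_pos) hs.le
  nlinarith [mul_lt_mul_of_pos_right h₁ hμ₂]

theorem K1_ne_one (h1 : √b ≠ ν₁) (h2 : √b * μ₂ ≠ 1) (hb : 0 < b)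
    (hD : ν₁ / √b + √b * μ₂ ≠ 0) : K1 ν₁ μ₂ b ≠ 1 := by
  have hs : √b ≠ 0 := (Real.sqrt_pos.2 hb).ne'
  rw [← sub_ne_zero, K1_sub_one hb hD]
  refine div_ne_zero (mul_ne_zero ?_ (sub_ne_zero.2 h2.symm)) hD
  rw [sub_ne_zero, ne_comm, ne_eq, div_eq_one_iff_eq hs]
  exact h1.symm

end K1

section ConstantStructure

variable {a₁ a₂ ν₁ μ₂ b : ℝ} {ω : ℂ}

-- `ω √b` times the paper's `θ`, which avoids dividing by `ω √b`
noncomputable def theta (b ν₁ a₁ : ℝ) (ω : ℂ) : ℝ → ℂ :=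
  cosSin (ω * √b) a₁ (ω * √b) (-I * ω * ν₁)

noncomputable def thetaDeriv (b ν₁ a₁ : ℝ) (ω : ℂ) : ℝ → ℂ :=
  cosSin (ω * √b) a₁ (ω * √b * (-I * ω * ν₁)) (-(ω * √b * (ω * √b)))

theorem mul_thetaDeriv_sub_I_mul_mul_theta (hb : 0 < b) (hD : ν₁ / √b + √b * μ₂ ≠ 0) (ω : ℂ)
    (a x : ℝ) :
    μ₂ * thetaDeriv b ν₁ a ω x - I * ω * theta b ν₁ a ω x =
      -(ω ^ 2 * √b * (ν₁ / √b + √b * μ₂)) *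
        (sin (ω * √b * (x - a)) + I * K1 ν₁ μ₂ b * cos (ω * √b * (x - a))) := by
  have hKD : (K1 ν₁ μ₂ b : ℂ) * (ν₁ / √b + √b * μ₂ : ℝ) = 1 + ν₁ * μ₂ := by
    exact_mod_cast div_mul_cancel₀ _ hD
  have hs : (√b : ℂ) * (ν₁ / √b : ℝ) = ν₁ := by
    exact_mod_cast mul_div_cancel₀ _ (Real.sqrt_pos.2 hb).ne'
  push_cast at hKD hs
  unfold theta thetaDeriv cosSin
  linear_combination ω ^ 2 * √b * I * cos (ω * √b * (x - a)) * hKD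
    + ω ^ 2 * sin (ω * √b * (x - a)) * hs + ω ^ 2 * ν₁ * sin (ω * √b * (x - a)) * I_sq

theorem neg_sq_mul_eq_neg_mul_sqrt_sq (hb : 0 ≤ b) (ω : ℂ) :
    -(ω ^ 2) * (b : ℂ) = -(ω * √b) ^ 2 := by
  rw [mul_pow, ← ofReal_pow, Real.sq_sqrt hb, neg_mul]

theorem isMode_theta (h12 : a₁ ≤ a₂) (hb : 0 < b) (hω : ω ≠ 0)
    (hbc : μ₂ * thetaDeriv b ν₁ a₁ ω a₂ = I * ω * theta b ν₁ a₁ ω a₂) :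
    IsMode a₁ a₂ (fun _ => b) ν₁ μ₂ ω (theta b ν₁ a₁ ω) (thetaDeriv b ν₁ a₁ ω) := by
  have hc : ω * √b ≠ 0 := mul_ne_zero hω (ofReal_ne_zero.2 (Real.sqrt_pos.2 hb).ne')
  refine ⟨by unfold theta; fun_prop, by unfold thetaDeriv; fun_prop,
    (by unfold theta; fun_prop : Continuous _).integrableOn_Icc, fun x _ => ?_, fun x _ => ?_,
    by simp only [theta, thetaDeriv, cosSin_self]; ring, hbc, a₁, ⟨le_rfl, h12⟩, by simpa [theta] using hc⟩
  · unfold theta thetaDeriv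
    rw [cosSin_self]
    exact cosSin_eq_add_integral _ _ _ _ x
  · unfold theta thetaDeriv
    simp only [cosSin_self, neg_sq_mul_eq_neg_mul_sqrt_sq hb.le]
    exact cosSin_derivative_eq_add_integral _ _ _ _ x

theorem IsMode.mul_eq_mul_theta {y g : ℝ → ℂ} (hb : 0 ≤ b)
    (hmode : IsMode a₁ a₂ (fun _ => b) ν₁ μ₂ ω y g) {x : ℝ} (hx : x ∈ Icc a₁ a₂) :
    ω * √b * y x = y a₁ * theta b ν₁ a₁ ω x ∧ ω * √b * g x = y a₁ * thetaDeriv b ν₁ a₁ ω x := by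
  obtain ⟨hy, hg, -, hyi, hgi, hbc₁, -⟩ := hmode
  simp only [neg_sq_mul_eq_neg_mul_sqrt_sq hb] at hgi
  obtain ⟨hyx, hgx⟩ := eq_cosSin_of_eq_add_integral hy hg hyi hgi hx
  rw [hbc₁] at hyx hgx
  unfold theta thetaDeriv cosSin at *
  constructor
  · linear_combination hyx
  · linear_combination ω * √b * hgx

theorem IsMode.sin_add_I_mul_K1_mul_cos_eq_zero {y g : ℝ → ℂ} (h12 : a₁ ≤ a₂) (hb : 0 < b)
    (hD : ν₁ / √b + √b * μ₂ ≠ 0) (hω : ω ≠ 0) (hmode : IsMode a₁ a₂ (fun _ => b) ν₁ μ₂ ω y g) :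
    sin (ω * √b * (a₂ - a₁)) + I * K1 ν₁ μ₂ b * cos (ω * √b * (a₂ - a₁)) = 0 := by
  have hs : (√b : ℂ) ≠ 0 := ofReal_ne_zero.2 (Real.sqrt_pos.2 hb).ne'
  have hθ {x : ℝ} (hx : x ∈ Icc a₁ a₂) := hmode.mul_eq_mul_theta hb.le hx
  obtain ⟨-, -, -, -, -, -, hbc₂, x₀, hx₀, hyx₀⟩ := hmode
  have hY : y a₁ ≠ 0 := by
    intro hY
    have := (hθ hx₀).1
    simp_all
  obtain ⟨hya₂, hga₂⟩ := hθ ⟨h12, le_rfl⟩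
  have hdefect := mul_thetaDeriv_sub_I_mul_mul_theta (μ₂ := μ₂) hb hD ω a₁ a₂
  have : y a₁ * -(ω ^ 2 * √b * (ν₁ / √b + √b * μ₂)) *
      (sin (ω * √b * (a₂ - a₁)) + I * K1 ν₁ μ₂ b * cos (ω * √b * (a₂ - a₁))) = 0 := by
    linear_combination -y a₁ * hdefect - μ₂ * hga₂ + I * ω * hya₂ + ω * √b * hbc₂
  have hD' : (ν₁ / √b + √b * μ₂ : ℂ) ≠ 0 := by exact_mod_cast hD
  simpa [hY, hω, hs, hD'] using this

theorem exists_isMode_const_iff (h12 : a₁ ≤ a₂) (hb : 0 < b) (hD : ν₁ / √b + √b * μ₂ ≠ 0)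
    (hω : ω ≠ 0) :
    (∃ y g, IsMode a₁ a₂ (fun _ => b) ν₁ μ₂ ω y g) ↔
      sin (ω * √b * (a₂ - a₁)) + I * K1 ν₁ μ₂ b * cos (ω * √b * (a₂ - a₁)) = 0 := by
  refine ⟨fun ⟨y, g, hmode⟩ => hmode.sin_add_I_mul_K1_mul_cos_eq_zero h12 hb hD hω,
    fun h => ⟨_, _, isMode_theta h12 hb hω ?_⟩⟩
  linear_combination mul_thetaDeriv_sub_I_mul_mul_theta hb hD ω a₁ a₂ -
    ω ^ 2 * √b * (ν₁ / √b + √b * μ₂) * h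

theorem isQuasiEigenvalue_const_iff (h12 : a₁ ≤ a₂) (hb : 0 < b)
    (hD : ν₁ / √b + √b * μ₂ ≠ 0) (hK₀ : K1 ν₁ μ₂ b ≠ 0) (hK₁ : K1 ν₁ μ₂ b ≠ 1) :
    IsQuasiEigenvalue a₁ a₂ (fun _ => b) ν₁ μ₂ ω ↔
      exp (2 * (ω * √b * (a₂ - a₁)) * I) = ((1 + K1 ν₁ μ₂ b) / (1 - K1 ν₁ μ₂ b) : ℝ) := by
  have hK₁' : (1 : ℂ) - K1 ν₁ μ₂ b ≠ 0 := sub_ne_zero.2 (by exact_mod_cast hK₁.symm)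
  have hchar (ω : ℂ) : exp (2 * (ω * √b * (a₂ - a₁)) * I) =
      ((1 + K1 ν₁ μ₂ b) / (1 - K1 ν₁ μ₂ b) : ℝ) ↔
      sin (ω * √b * (a₂ - a₁)) + I * K1 ν₁ μ₂ b * cos (ω * √b * (a₂ - a₁)) = 0 := by
    rw [sin_add_I_mul_mul_cos_eq_zero_iff, ← eq_div_iff hK₁']
    push_cast
    rfl
  rw [IsQuasiEigenvalue, hchar]
  refine ⟨fun ⟨hω, hmode⟩ => (exists_isMode_const_iff h12 hb hD hω).1 hmode, fun h => ?_⟩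
  have hω : ω ≠ 0 := by
    rintro rfl
    simp [hK₀] at h
  exact ⟨hω, (exists_isMode_const_iff h12 hb hD hω).2 h⟩

end ConstantStructure

theorem stmt3_general (a₁ a₂ : ℝ) (h12 : a₁ < a₂) (ν₁ μ₂ : ℝ) (hν₁ : 0 ≤ ν₁) (hμ₂ : 0 ≤ μ₂)
    (hne : ¬(ν₁ = 0 ∧ μ₂ = 0)) (hle : ν₁ * μ₂ ≤ 1) (b : ℝ) (hb : 0 < b)
    (h1 : Real.sqrt b ≠ ν₁) (h2 : Real.sqrt b * μ₂ ≠ 1) :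
    {ω : ℂ | IsQuasiEigenvalue a₁ a₂ (fun _ => b) ν₁ μ₂ ω} =
      {ω : ℂ | ∃ n : ℤ,
        ω = -(Complex.I *
              ((Real.log |(1 + K1 ν₁ μ₂ b) / (1 - K1 ν₁ μ₂ b)| /
                (2 * Real.sqrt b * (a₂ - a₁)) : ℝ) : ℂ))
          + ((Real.pi / (Real.sqrt b * (a₂ - a₁)) *
              (if ν₁ < Real.sqrt b ∧ Real.sqrt b * μ₂ < 1 then (n : ℝ) + 1 / 2
               else (n : ℝ)) : ℝ) : ℂ)} := by
  have hD := K1_denom_pos hν₁ hμ₂ hne hb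
  have hK₀ : 0 < K1 ν₁ μ₂ b := div_pos (add_pos_of_pos_of_nonneg one_pos (mul_nonneg hν₁ hμ₂)) hD
  have hK₁ := K1_ne_one h1 h2 hb hD.ne'
  have hR : (1 + K1 ν₁ μ₂ b) / (1 - K1 ν₁ μ₂ b) ≠ 0 :=
    div_ne_zero (by linarith) (sub_ne_zero.2 hK₁.symm)
  have hRneg : (1 + K1 ν₁ μ₂ b) / (1 - K1 ν₁ μ₂ b) < 0 ↔ ν₁ < √b ∧ √b * μ₂ < 1 := by
    rw [div_neg_iff, or_iff_left (fun h => by linarith [h.1]), and_iff_right (by linarith),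
      sub_neg, one_lt_K1_iff hle hb hD]
  have hsL : (√b : ℂ) * (a₂ - a₁) ≠ 0 :=
    mul_ne_zero (ofReal_ne_zero.2 (Real.sqrt_pos.2 hb).ne')
      (sub_ne_zero.2 (by exact_mod_cast h12.ne'))
  ext ω
  rw [mem_ofPred_eq, isQuasiEigenvalue_const_iff h12.le hb hD.ne' hK₀.ne' hK₁,
    exp_two_mul_mul_I_eq_ofReal_iff hR, mem_ofPred_eq]
  simp only [hRneg]
  refine exists_congr fun n => ?_
  rw [mul_assoc, ← eq_div_iff hsL]
  refine Eq.congr_right ?_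
  push_cast
  field_simp

/-- Explicit quasi-eigenvalues of the homogeneous structure `B ≡ b`, `b > 0`,
`√b ∉ {ν₁, ν₂}` (the case `K₁ ≠ 1`).  Here `μ₂ = 1/ν₂`, so `√b ≠ ν₂` reads
`√b * μ₂ ≠ 1`, and `√b ∈ (ν₁,ν₂)` reads `ν₁ < √b ∧ √b * μ₂ < 1`. -/
theorem stmt3 (a₁ a₂ : ℝ) (h12 : a₁ < a₂) (ν₁ μ₂ : ℝ) (hν₁ : 0 ≤ ν₁) (hμ₂ : 0 ≤ μ₂)
    (hne : ¬(ν₁ = 0 ∧ μ₂ = 0)) (hle : ν₁ * μ₂ ≤ 1) (b : ℝ) (hb : 0 < b)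
    (h1 : Real.sqrt b ≠ ν₁) (h2 : Real.sqrt b * μ₂ ≠ 1)
    (hK : K1 ν₁ μ₂ b ≠ 1) :
    {ω : ℂ | IsQuasiEigenvalue a₁ a₂ (fun _ => b) ν₁ μ₂ ω} =
      {ω : ℂ | ∃ n : ℤ,
        ω = -(Complex.I *
              ((Real.log |(1 + K1 ν₁ μ₂ b) / (1 - K1 ν₁ μ₂ b)| /
                (2 * Real.sqrt b * (a₂ - a₁)) : ℝ) : ℂ))
          + ((Real.pi / (Real.sqrt b * (a₂ - a₁)) *
              (if ν₁ < Real.sqrt b ∧ Real.sqrt b * μ₂ < 1 then (n : ℝ) + 1 / 2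
               else (n : ℝ)) : ℝ) : ℂ)} :=
  stmt3_general a₁ a₂ h12 ν₁ μ₂ hν₁ hμ₂ hne hle b hb h1 h2
end

section
/- Define recursively ψ₀(x;B) = x - a₁ and ψⱼ(x;B) = ∫_{a₁}^x (x-s) ψ_{j-1}(s;B) B(s) ds for B ∈ L¹(a₁,a₂). Then for all j ≥ 1 and all x ∈ [a₁,a₂], |ψⱼ(x;B)| ≤ ψⱼ(a₂;|B|) ≤ 2ʲ (a₂-a₁)^{j+1} ‖B‖₁ʲ / (2j)!. -/
/-! Writing `m(x) = ∫_{a₁}^x |B|`, an induction on `j` gives `|ψⱼ(x;B)| ≤ ψⱼ(x;|B|)`, which is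
increasing in `x`, and `ψⱼ(x;|B|) ≤ (x - a₁)^{j+1} m(x)^j / ((j+1)^{j+1} j!)`: in the inductive
step the AM-GM inequality bounds `(x - s)(s - a₁)^{j+1}`, and `∫ m^j dm = m^{j+1}/(j+1)` by the
fundamental theorem of calculus for the absolutely continuous `m`. Finally
`(2j)! ≤ (2j)^j j! ≤ 2^j (j+1)^{j+1} j!`. -/

open MeasureTheory Set

/-- The iterated kernels `ψⱼ(x;B)` for a complex coefficient `B`. -/
noncomputable def psiC (a₁ : ℝ) (B : ℝ → ℂ) : ℕ → ℝ → ℂ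
  | 0, x => ((x - a₁ : ℝ) : ℂ)
  | (j + 1), x => ∫ s in a₁..x, ((x - s : ℝ) : ℂ) * psiC a₁ B j s * B s

/-- The iterated kernels for a real (nonnegative) coefficient. -/
noncomputable def psiR (a₁ : ℝ) (β : ℝ → ℝ) : ℕ → ℝ → ℝ
  | 0, x => x - a₁
  | (j + 1), x => ∫ s in a₁..x, (x - s) * psiR a₁ β j s * β s

open intervalIntegral

theorem mul_pow_le_add_pow (n : ℕ) {u v : ℝ} (hu : 0 ≤ u) (hv : 0 ≤ v) :
    u * v ^ (n + 1) ≤ (n + 1) ^ (n + 1) / (n + 2) ^ (n + 2) * (u + v) ^ (n + 2) := by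
  rcases hv.eq_or_lt with rfl | hv
  · rw [zero_pow n.succ_ne_zero, mul_zero]
    positivity
  -- Bernoulli's inequality at `a = (n+1) (u+v) / ((n+2) v) - 1`
  have hb := one_add_mul_le_pow (a := ((n + 1) * u - v) / ((n + 2) * v))
    (by rw [le_div_iff₀ (by positivity)]; nlinarith) (n + 2)
  have h1 : 1 + ((n + 2 : ℕ) : ℝ) * (((n + 1) * u - v) / ((n + 2) * v)) = (n + 1) * u / v := by
    push_cast; field_simp; ring
  have h2 : 1 + ((n + 1) * u - v) / ((n + 2) * v) = (n + 1) * (u + v) / ((n + 2) * v) := by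
    field_simp; ring
  rw [h1, h2, div_pow, mul_pow, mul_pow, div_le_div_iff₀ hv (by positivity)] at hb
  rw [div_mul_eq_mul_div, le_div_iff₀ (by positivity)]
  refine le_of_mul_le_mul_left ?_ (by positivity : (0 : ℝ) < (n + 1) * v)
  calc (n + 1) * v * (u * v ^ (n + 1) * (n + 2) ^ (n + 2))
      = (n + 1) * u * ((n + 2) ^ (n + 2) * v ^ (n + 2)) := by ring
    _ ≤ (n + 1) ^ (n + 2) * (u + v) ^ (n + 2) * v := hb
    _ = (n + 1) * v * ((n + 1) ^ (n + 1) * (u + v) ^ (n + 2)) := by ring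

theorem Nat.factorial_two_mul_le_two_pow_mul (j : ℕ) :
    (2 * j).factorial ≤ 2 ^ j * ((j + 1) ^ (j + 1) * j.factorial) :=
  calc (2 * j).factorial ≤ (2 * j) ^ j * j.factorial := Nat.factorial_two_mul_le j
    _ = 2 ^ j * (j ^ j * j.factorial) := by ring
    _ ≤ 2 ^ j * ((j + 1) ^ (j + 1) * j.factorial) := by
      gcongr <;> omega

theorem MeasureTheory.IntegrableOn.intervalIntegrable_of_mem_Icc {E : Type*}
    [NormedAddCommGroup E] {f : ℝ → E} {a b x : ℝ} (hf : IntegrableOn f (Icc a b))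
    (hx : x ∈ Icc a b) : IntervalIntegrable f volume a x :=
  (hf.mono_set (uIcc_subset_Icc (left_mem_Icc.2 (hx.1.trans hx.2)) hx)).intervalIntegrable

theorem AbsolutelyContinuousOnInterval.pow_succ {f : ℝ → ℝ} {a b : ℝ}
    (hf : AbsolutelyContinuousOnInterval f a b) (n : ℕ) :
    AbsolutelyContinuousOnInterval (fun x => f x ^ (n + 1)) a b := by
  induction n with
  | zero => simpa using hf
  | succ n ih =>
    convert ih.fun_mul hf using 1
    ext x
    ring

theorem integral_primitive_pow_mul {β : ℝ → ℝ} {a b : ℝ}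
    (hβ : IntervalIntegrable β volume a b) (n : ℕ) :
    ∫ x in a..b, (∫ t in a..x, β t) ^ n * β x = (∫ t in a..b, β t) ^ (n + 1) / (n + 1) := by
  set m : ℝ → ℝ := fun x => ∫ t in a..x, β t
  have hm : AbsolutelyContinuousOnInterval m a b :=
    hβ.absolutelyContinuousOnInterval_intervalIntegral left_mem_uIcc
  have hderiv : ∀ᵐ x, x ∈ uIoc a b →
      deriv (fun x => m x ^ (n + 1)) x = (n + 1) * (m x ^ n * β x) := by
    filter_upwards [hβ.ae_hasDerivAt_integral] with x hx hxI
    rw [((hx (uIoc_subset_uIcc hxI) a left_mem_uIcc).fun_pow (n + 1)).deriv]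
    push_cast
    ring
  have hFTC := (hm.pow_succ n).integral_deriv_eq_sub
  rw [integral_congr_ae hderiv, intervalIntegral.integral_const_mul] at hFTC
  simp only [m, integral_same, zero_pow n.succ_ne_zero, sub_zero] at hFTC
  rw [← hFTC]
  field_simp

theorem continuousOn_integral_sub_mul {f : ℝ → ℝ} {a b : ℝ} (hf : IntegrableOn f (Icc a b)) :
    ContinuousOn (fun x => ∫ s in a..x, (x - s) * f s) (Icc a b) := by
  rcases le_or_gt a b with hab | hab
  swap
  · simp [Icc_eq_empty_of_lt hab]
  have hprim : ∀ g : ℝ → ℝ, IntegrableOn g (Icc a b) →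
      ContinuousOn (fun x => ∫ s in a..x, g s) (Icc a b) := fun g hg => by
    have := continuousOn_primitive_interval (μ := volume) (a := a) (b := b) (f := g)
      (by rwa [uIcc_of_le hab])
    rwa [uIcc_of_le hab] at this
  have hsf : IntegrableOn (fun s => s * f s) (Icc a b) :=
    hf.continuousOn_mul continuousOn_id isCompact_Icc
  refine ((continuousOn_id.mul (hprim f hf)).sub (hprim _ hsf)).congr fun x hx => ?_
  show _ = x * _ - _
  simp only [sub_mul, intervalIntegral.integral_const_mul,
    intervalIntegral.integral_sub ((hf.intervalIntegrable_of_mem_Icc hx).const_mul x)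
      (hsf.intervalIntegrable_of_mem_Icc hx)]

section

variable {a b : ℝ} {β : ℝ → ℝ}

theorem psiR_nonneg (hβ : ∀ s, 0 ≤ β s) : ∀ j {x}, a ≤ x → 0 ≤ psiR a β j x
  | 0, _, hx => sub_nonneg.2 hx
  | j + 1, _, hx => integral_nonneg hx fun s hs =>
      mul_nonneg (mul_nonneg (sub_nonneg.2 hs.2) (psiR_nonneg hβ j hs.1)) (hβ s)

theorem psiR_succ_eq (j : ℕ) :
    psiR a β (j + 1) = fun x => ∫ s in a..x, (x - s) * (psiR a β j s * β s) := by
  ext x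
  simp only [psiR, mul_assoc]

theorem continuousOn_psiR (hβ : IntegrableOn β (Icc a b)) :
    ∀ j, ContinuousOn (psiR a β j) (Icc a b)
  | 0 => (continuous_id.sub continuous_const).continuousOn
  | j + 1 => psiR_succ_eq j ▸
      continuousOn_integral_sub_mul (hβ.continuousOn_mul (continuousOn_psiR hβ j) isCompact_Icc)

theorem intervalIntegrable_sub_mul_psiR_mul (hβ : IntegrableOn β (Icc a b)) (j : ℕ) (y : ℝ)
    {x : ℝ} (hx : x ∈ Icc a b) :
    IntervalIntegrable (fun s => (y - s) * psiR a β j s * β s) volume a x :=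
  (hβ.continuousOn_mul (((continuous_const.sub continuous_id).continuousOn).mul
    (continuousOn_psiR hβ j)) isCompact_Icc).intervalIntegrable_of_mem_Icc hx

theorem monotoneOn_psiR (hβ : IntegrableOn β (Icc a b)) (hβ0 : ∀ s, 0 ≤ β s) :
    ∀ j, MonotoneOn (psiR a β j) (Icc a b)
  | 0 => fun _ _ _ _ hxy => sub_le_sub_right hxy a
  | j + 1 => fun x hx y hy hxy => by
    have hψ : ∀ s, a ≤ s → 0 ≤ psiR a β j s := fun s => psiR_nonneg hβ0 j
    calc ∫ s in a..x, (x - s) * psiR a β j s * β s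
        ≤ ∫ s in a..x, (y - s) * psiR a β j s * β s :=
          integral_mono_on hx.1 (intervalIntegrable_sub_mul_psiR_mul hβ j x hx)
            (intervalIntegrable_sub_mul_psiR_mul hβ j y hx) fun s hs => by
            gcongr
            · exact hβ0 s
            · exact hψ s hs.1
      _ ≤ ∫ s in a..y, (y - s) * psiR a β j s * β s :=
          integral_mono_interval le_rfl hx.1 hxy
            ((ae_restrict_iff' measurableSet_Ioc).2 (ae_of_all _ fun s hs =>
              mul_nonneg (mul_nonneg (sub_nonneg.2 hs.2) (hψ s hs.1.le)) (hβ0 s)))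
            (intervalIntegrable_sub_mul_psiR_mul hβ j y hy)

theorem psiR_le (hβ : IntegrableOn β (Icc a b)) (hβ0 : ∀ s, 0 ≤ β s) :
    ∀ j {x}, x ∈ Icc a b → psiR a β j x ≤
      (x - a) ^ (j + 1) * (∫ t in a..x, β t) ^ j / (((j : ℝ) + 1) ^ (j + 1) * j.factorial)
  | 0, x, _ => by simp [psiR]
  | j + 1, x, hx => by
    set m : ℝ → ℝ := fun s => ∫ t in a..s, β t
    set D : ℝ := ((j : ℝ) + 1) ^ (j + 1) * j.factorial
    set K : ℝ := (j + 1) ^ (j + 1) / (j + 2) ^ (j + 2) * (x - a) ^ (j + 2) / D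
    have hm : IntervalIntegrable (fun s => m s ^ j * β s) volume a x := by
      have hβx := hβ.intervalIntegrable_of_mem_Icc hx
      exact hβx.continuousOn_mul
        ((continuousOn_primitive_interval' hβx left_mem_uIcc).pow j)
    have hpoint : ∀ s ∈ Icc a x, (x - s) * psiR a β j s * β s ≤ K * (m s ^ j * β s) := by
      intro s hs
      have hs' : s ∈ Icc a b := ⟨hs.1, hs.2.trans hx.2⟩
      have hamgm := mul_pow_le_add_pow j (sub_nonneg.2 hs.2) (sub_nonneg.2 hs.1)
      rw [sub_add_sub_cancel] at hamgm
      calc (x - s) * psiR a β j s * β s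
          ≤ (x - s) * ((s - a) ^ (j + 1) * m s ^ j / D) * β s := by
            gcongr
            · exact hβ0 s
            · exact sub_nonneg.2 hs.2
            · exact psiR_le hβ hβ0 j hs'
        _ = (x - s) * (s - a) ^ (j + 1) * (m s ^ j * β s) / D := by ring
        _ ≤ K * (m s ^ j * β s) := by
            rw [mul_div_right_comm]
            refine mul_le_mul_of_nonneg_right (div_le_div_of_nonneg_right hamgm (by positivity))
              (mul_nonneg (pow_nonneg (integral_nonneg hs.1 fun t _ => hβ0 t) j) (hβ0 s))
    calc psiR a β (j + 1) x
        ≤ ∫ s in a..x, K * (m s ^ j * β s) :=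
          integral_mono_on hx.1 (intervalIntegrable_sub_mul_psiR_mul hβ j x hx)
            (hm.const_mul K) hpoint
      _ = K * (m x ^ (j + 1) / (j + 1)) := by
          rw [intervalIntegral.integral_const_mul, integral_primitive_pow_mul
            (hβ.intervalIntegrable_of_mem_Icc hx)]
      _ = _ := by
          simp only [K, D, m, Nat.factorial_succ]
          push_cast
          field_simp
          ring

theorem norm_psiC_le_psiR {B : ℝ → ℂ} (hB : IntegrableOn B (Icc a b)) :
    ∀ j {x}, x ∈ Icc a b → ‖psiC a B j x‖ ≤ psiR a (fun s => ‖B s‖) j x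
  | 0, x, hx => by
    rw [psiC, psiR, Complex.norm_real, Real.norm_of_nonneg (sub_nonneg.2 hx.1)]
  | j + 1, x, hx => norm_integral_le_of_norm_le hx.1
      (ae_of_all _ fun s hs => by
        rw [norm_mul, norm_mul, Complex.norm_real, Real.norm_eq_abs,
          abs_of_nonneg (sub_nonneg.2 hs.2)]
        gcongr
        · exact sub_nonneg.2 hs.2
        · exact norm_psiC_le_psiR hB j ⟨hs.1.le, hs.2.trans hx.2⟩)
      (intervalIntegrable_sub_mul_psiR_mul hB.norm j x hx)

end

theorem stmt6_general (a₁ a₂ : ℝ) (B : ℝ → ℂ)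
    (hB : MeasureTheory.IntegrableOn B (Set.Icc a₁ a₂))
    (j : ℕ) (x : ℝ) (hx : x ∈ Set.Icc a₁ a₂) :
    ‖psiC a₁ B j x‖ ≤ psiR a₁ (fun s => ‖B s‖) j a₂ ∧
    psiR a₁ (fun s => ‖B s‖) j a₂ ≤
      2 ^ j * (a₂ - a₁) ^ (j + 1) * (∫ s in a₁..a₂, ‖B s‖) ^ j /
        (Nat.factorial (2 * j)) := by
  have hβ0 : ∀ s, 0 ≤ ‖B s‖ := fun s => norm_nonneg _
  have ha₂ : a₂ ∈ Icc a₁ a₂ := ⟨hx.1.trans hx.2, le_rfl⟩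
  refine ⟨(norm_psiC_le_psiR hB j hx).trans (monotoneOn_psiR hB.norm hβ0 j hx ha₂ hx.2),
    (psiR_le hB.norm hβ0 j ha₂).trans ?_⟩
  have hfact : ((2 * j).factorial : ℝ) ≤ 2 ^ j * ((j + 1) ^ (j + 1) * j.factorial) := by
    exact_mod_cast Nat.factorial_two_mul_le_two_pow_mul j
  have hL : 0 ≤ a₂ - a₁ := sub_nonneg.2 ha₂.1
  have hM : 0 ≤ ∫ s in a₁..a₂, ‖B s‖ := integral_nonneg ha₂.1 fun s _ => hβ0 s
  rw [mul_assoc, ← mul_div_mul_left _ _ (pow_ne_zero j two_ne_zero)]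
  exact div_le_div_of_nonneg_left (by positivity) (by positivity) hfact

/-- Bounds on the iterated kernels:
`|ψⱼ(x;B)| ≤ ψⱼ(a₂;|B|) ≤ 2ʲ (a₂-a₁)^{j+1} ‖B‖₁ʲ / (2j)!` for `j ≥ 1`, `x ∈ [a₁,a₂]`. -/
theorem stmt6 (a₁ a₂ : ℝ) (h12 : a₁ < a₂) (B : ℝ → ℂ)
    (hB : MeasureTheory.IntegrableOn B (Set.Icc a₁ a₂))
    (j : ℕ) (hj : 1 ≤ j) (x : ℝ) (hx : x ∈ Set.Icc a₁ a₂) :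
    ‖psiC a₁ B j x‖ ≤ psiR a₁ (fun s => ‖B s‖) j a₂ ∧
    psiR a₁ (fun s => ‖B s‖) j a₂ ≤
      2 ^ j * (a₂ - a₁) ^ (j + 1) * (∫ s in a₁..a₂, ‖B s‖) ^ j /
        (Nat.factorial (2 * j)) :=
  stmt6_general a₁ a₂ B hB j x hx
end

section
/- Under the hypotheses of the previous statement and assuming additionally that ω is a quasi-eigenvalue (so θ satisfies also θ'(a₂) = iω ν₂ θ(a₂) with ν₂ ∈ (0,∞]), there exists a unique closed subinterval [x₊, x⁺] ⊂ [a₁,a₂] such that Im(θ̄(x)θ'(x)) < 0 for x < x₊, Im(θ̄(x)θ'(x)) = 0 for x ∈ [x₊, x⁺], and Im(θ̄(x)θ'(x)) > 0 for x > x⁺. -/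
/-!
The flux `F x = Im (conj (θ x) * θ' x)` (here `θ' = g`, and `μ₂ = 1 / ν₂` so that `ν₂ = ∞` is
`μ₂ = 0`) is absolutely continuous, and almost everywhere
`F' = Im (conj θ' * θ' + conj θ * θ'') = -Im (ω²) B |θ|² ≥ 0` because `Re ω > 0 > Im ω`.
Hence `F` is nondecreasing. The boundary conditions give `F a₁ = -ν₁ Re ω ≤ 0` and
`μ₂ F a₂ = Re ω |θ a₂|² ≥ 0`, where `μ₂ = 0` forces `θ a₂ = 0`. A continuous nondecreasing
function with these endpoint signs is negative before its least zero, positive after its greatest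
zero and vanishes in between.
-/

open MeasureTheory Set ComplexConjugate

theorem AbsolutelyContinuousOnInterval.congr {X : Type*} [PseudoMetricSpace X] {f g : ℝ → X}
    {a b : ℝ} (hf : AbsolutelyContinuousOnInterval f a b) (hfg : EqOn f g (uIcc a b)) :
    AbsolutelyContinuousOnInterval g a b := by
  refine Filter.Tendsto.congr' ?_ hf
  filter_upwards [Filter.mem_inf_of_right (Filter.mem_principal_self _)] with E hE
  exact Finset.sum_congr rfl fun i hi => by rw [hfg (hE.1 i hi).1, hfg (hE.1 i hi).2]

theorem AbsolutelyContinuousOnInterval.monotoneOn_of_ae_deriv_nonneg {f : ℝ → ℝ} {a b : ℝ}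
    (hf : AbsolutelyContinuousOnInterval f a b)
    (hf' : ∀ᵐ t ∂volume.restrict (Icc a b), 0 ≤ deriv f t) :
    MonotoneOn f (Icc a b) := by
  intro x hx y hy hxy
  have hsub : Icc x y ⊆ Icc a b := Icc_subset_Icc hx.1 hy.2
  have hsub' : uIcc x y ⊆ uIcc a b := by
    rw [uIcc_of_le hxy]; exact hsub.trans Icc_subset_uIcc
  have hftc := (hf.mono hsub').integral_deriv_eq_sub
  have hnn : 0 ≤ ∫ t in x..y, deriv f t :=
    intervalIntegral.integral_nonneg_of_ae_restrict hxy
      (ae_restrict_of_ae_restrict_of_subset hsub hf')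
  linarith

section IndefiniteIntegral

variable {E : Type*} [NormedAddCommGroup E] [NormedSpace ℝ E] [CompleteSpace E]

def IsIndefiniteIntegralOn (u u' : ℝ → E) (a b : ℝ) : Prop :=
  ∀ x ∈ Icc a b, u x = u a + ∫ t in a..x, u' t

variable {u u' : ℝ → E} {a b : ℝ}

theorem IsIndefiniteIntegralOn.absolutelyContinuousOnInterval_comp (hab : a ≤ b)
    (hu' : IntervalIntegrable u' volume a b) (hu : IsIndefiniteIntegralOn u u' a b)
    (L : E →L[ℝ] ℝ) : AbsolutelyContinuousOnInterval (fun x => L (u x)) a b := by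
  have hconst : AbsolutelyContinuousOnInterval (fun _ => L (u a)) a b :=
    (LipschitzWith.const (L (u a))).lipschitzOnWith.absolutelyContinuousOnInterval
  have hLu' : IntervalIntegrable (fun t => L (u' t)) volume a b :=
    ⟨L.integrable_comp hu'.1, L.integrable_comp hu'.2⟩
  refine (hconst.add (hLu'.absolutelyContinuousOnInterval_intervalIntegral
    left_mem_uIcc)).congr fun x hx => ?_
  rw [uIcc_of_le hab] at hx
  simp only [Pi.add_apply, hu x hx, map_add]
  rw [L.intervalIntegral_comp_comm (hu'.mono_set (by
    rw [uIcc_of_le hab, uIcc_of_le hx.1]; exact Icc_subset_Icc_right hx.2))]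

theorem IsIndefiniteIntegralOn.ae_hasDerivAt (hab : a ≤ b)
    (hu' : IntervalIntegrable u' volume a b) (hu : IsIndefiniteIntegralOn u u' a b) :
    ∀ᵐ t ∂volume.restrict (Icc a b), HasDerivAt u (u' t) t := by
  rw [← restrict_Ioo_eq_restrict_Icc]
  filter_upwards [ae_restrict_mem measurableSet_Ioo,
    ae_restrict_of_ae hu'.ae_hasDerivAt_integral] with t ht hderiv
  have htI : t ∈ uIcc a b := by rw [uIcc_of_le hab]; exact Ioo_subset_Icc_self ht
  refine ((hderiv htI a left_mem_uIcc).const_add (u a)).congr_of_eventuallyEq ?_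
  filter_upwards [Icc_mem_nhds ht.1 ht.2] with x hx using hu x hx

end IndefiniteIntegral

theorem HasDerivAt.im_conj_mul {u v : ℝ → ℂ} {u' v' : ℂ} {t : ℝ} (hu : HasDerivAt u u' t)
    (hv : HasDerivAt v v' t) :
    HasDerivAt (fun x => (conj (u x) * v x).im) (conj u' * v t + conj (u t) * v').im t :=
  Complex.imCLM.hasFDerivAt.comp_hasDerivAt t (hu.star.mul hv)

section Flux

variable {u v w : ℝ → ℂ} {a b : ℝ}

theorem absolutelyContinuousOnInterval_im_conj_mul (hab : a ≤ b)
    (hv : IntervalIntegrable v volume a b) (hw : IntervalIntegrable w volume a b)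
    (huv : IsIndefiniteIntegralOn u v a b) (hvw : IsIndefiniteIntegralOn v w a b) :
    AbsolutelyContinuousOnInterval (fun x => (conj (u x) * v x).im) a b := by
  have hu_re := huv.absolutelyContinuousOnInterval_comp hab hv Complex.reCLM
  have hu_im := huv.absolutelyContinuousOnInterval_comp hab hv Complex.imCLM
  have hv_re := hvw.absolutelyContinuousOnInterval_comp hab hw Complex.reCLM
  have hv_im := hvw.absolutelyContinuousOnInterval_comp hab hw Complex.imCLM
  refine ((hu_re.mul hv_im).sub (hu_im.mul hv_re)).congr fun x _ => ?_
  simp only [Complex.reCLM_apply, Complex.imCLM_apply, Pi.sub_apply, Pi.mul_apply,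
    Complex.mul_im, Complex.conj_re, Complex.conj_im]
  ring

theorem monotoneOn_im_conj_mul (hab : a ≤ b)
    (hv : IntervalIntegrable v volume a b) (hw : IntervalIntegrable w volume a b)
    (huv : IsIndefiniteIntegralOn u v a b) (hvw : IsIndefiniteIntegralOn v w a b)
    (huw : ∀ᵐ t ∂volume.restrict (Icc a b), 0 ≤ (conj (u t) * w t).im) :
    MonotoneOn (fun x => (conj (u x) * v x).im) (Icc a b) := by
  refine (absolutelyContinuousOnInterval_im_conj_mul hab hv hw huv hvw)
    |>.monotoneOn_of_ae_deriv_nonneg ?_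
  filter_upwards [huv.ae_hasDerivAt hab hv, hvw.ae_hasDerivAt hab hw, huw] with t hu hv hut
  rwa [(hu.im_conj_mul hv).deriv, Complex.add_im, Complex.conj_mul', ← Complex.ofReal_pow,
    Complex.ofReal_im, zero_add]

end Flux

section TurningInterval

variable {f : ℝ → ℝ} {a b : ℝ}

def IsTurningInterval (f : ℝ → ℝ) (a b : ℝ) (p : ℝ × ℝ) : Prop :=
  a ≤ p.1 ∧ p.1 ≤ p.2 ∧ p.2 ≤ b ∧
    (∀ x ∈ Icc a b, x < p.1 → f x < 0) ∧
    (∀ x ∈ Icc p.1 p.2, f x = 0) ∧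
    (∀ x ∈ Icc a b, p.2 < x → 0 < f x)

namespace IsTurningInterval

variable {p q : ℝ × ℝ}

theorem fst_le_fst (hp : IsTurningInterval f a b p) (hq : IsTurningInterval f a b q) :
    p.1 ≤ q.1 := by
  obtain ⟨-, -, -, hpneg, -, -⟩ := hp
  obtain ⟨haq, hq12, hqb, -, hq0, -⟩ := hq
  by_contra! h
  exact (hpneg q.1 ⟨haq, hq12.trans hqb⟩ h).ne (hq0 q.1 ⟨le_rfl, hq12⟩)

theorem snd_le_snd (hp : IsTurningInterval f a b p) (hq : IsTurningInterval f a b q) :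
    p.2 ≤ q.2 := by
  obtain ⟨hap, hp12, hpb, -, hp0, -⟩ := hp
  obtain ⟨-, -, -, -, -, hqpos⟩ := hq
  by_contra! h
  exact (hqpos p.2 ⟨hap.trans hp12, hpb⟩ h).ne' (hp0 p.2 ⟨hp12, le_rfl⟩)

theorem unique (hp : IsTurningInterval f a b p) (hq : IsTurningInterval f a b q) : p = q :=
  Prod.ext ((hp.fst_le_fst hq).antisymm (hq.fst_le_fst hp))
    ((hp.snd_le_snd hq).antisymm (hq.snd_le_snd hp))

end IsTurningInterval

theorem MonotoneOn.exists_isTurningInterval (hab : a ≤ b) (hc : ContinuousOn f (Icc a b))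
    (hm : MonotoneOn f (Icc a b)) (ha : f a ≤ 0) (hb : 0 ≤ f b) :
    ∃ p, IsTurningInterval f a b p := by
  set Z := Icc a b ∩ f ⁻¹' {0}
  have hZ : IsCompact Z :=
    isCompact_Icc.of_isClosed_subset
      (hc.preimage_isClosed_of_isClosed isClosed_Icc isClosed_singleton) inter_subset_left
  have hZne : Z.Nonempty := by
    obtain ⟨c, hc, hc0⟩ := intermediate_value_Icc hab hc ⟨ha, hb⟩
    exact ⟨c, hc, hc0⟩
  obtain ⟨hp₁, hfp₁⟩ := hZ.sInf_mem hZne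
  obtain ⟨hp₂, hfp₂⟩ := hZ.sSup_mem hZne
  have hle : sInf Z ≤ sSup Z := csInf_le hZ.bddBelow (hZ.sSup_mem hZne)
  refine ⟨(sInf Z, sSup Z), hp₁.1, hle, hp₂.2, fun x hx hlt => ?_, fun x hx => ?_,
    fun x hx hlt => ?_⟩
  · refine (hm hx hp₁ hlt.le).trans_eq hfp₁ |>.lt_of_ne fun h0 => ?_
    exact hlt.not_ge (csInf_le hZ.bddBelow ⟨hx, h0⟩)
  · have hxI : x ∈ Icc a b := ⟨hp₁.1.trans hx.1, hx.2.trans hp₂.2⟩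
    exact le_antisymm (hfp₂ ▸ hm hxI hp₂ hx.2) (hfp₁ ▸ hm hp₁ hxI hx.1)
  · refine hfp₂.symm.trans_le (hm hp₂ hx hlt.le) |>.lt_of_ne fun h0 => ?_
    exact hlt.not_ge (le_csSup hZ.bddAbove ⟨hx, h0.symm⟩)

theorem MonotoneOn.existsUnique_isTurningInterval (hab : a ≤ b) (hc : ContinuousOn f (Icc a b))
    (hm : MonotoneOn f (Icc a b)) (ha : f a ≤ 0) (hb : 0 ≤ f b) :
    ∃! p, IsTurningInterval f a b p :=
  let ⟨p, hp⟩ := hm.exists_isTurningInterval hab hc ha hb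
  ⟨p, hp, fun _ hq => hq.unique hp⟩

end TurningInterval

theorem im_conj_mul_nonneg_of_ofReal_mul_eq {μ : ℝ} (hμ : 0 ≤ μ) {ω z w : ℂ} (hω : 0 < ω.re)
    (h : μ * w = Complex.I * ω * z) : 0 ≤ (conj z * w).im := by
  have key : μ * (conj z * w).im = ω.re * Complex.normSq z := by
    calc μ * (conj z * w).im = (conj z * (μ * w)).im := by
          rw [mul_left_comm, Complex.im_ofReal_mul]
      _ = (Complex.I * ω * (conj z * z)).im := by rw [h]; ring_nf
      _ = ω.re * Complex.normSq z := by
          rw [← Complex.normSq_eq_conj_mul_self]; simp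
  rcases hμ.eq_or_lt with rfl | hμ
  · have hz : z = 0 := by simpa [hω.ne'] using key.symm
    simp [hz]
  · exact nonneg_of_mul_nonneg_right (key ▸ mul_nonneg hω.le (Complex.normSq_nonneg z)) hμ

theorem stmt9_general (a₁ a₂ : ℝ) (h12 : a₁ < a₂) (B : ℝ → ℝ)
    (hB0 : ∀ᵐ x ∂(MeasureTheory.volume.restrict (Set.Icc a₁ a₂)), 0 ≤ B x)
    (ν₁ μ₂ : ℝ) (hν₁ : 0 ≤ ν₁) (hμ₂ : 0 ≤ μ₂)
    (ω : ℂ) (hre : 0 < ω.re) (him : ω.im < 0)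
    (θ g : ℝ → ℂ)
    (hgC : ContinuousOn g (Set.Icc a₁ a₂))
    (hint : MeasureTheory.IntegrableOn (fun t => (B t : ℂ) * θ t) (Set.Icc a₁ a₂))
    (hθ : ∀ x ∈ Set.Icc a₁ a₂, θ x = θ a₁ + ∫ t in a₁..x, g t)
    (hg : ∀ x ∈ Set.Icc a₁ a₂, g x = g a₁ + ∫ t in a₁..x, -(ω ^ 2) * (B t : ℂ) * θ t)
    (hic0 : θ a₁ = 1) (hic1 : g a₁ = -Complex.I * ω * (ν₁ : ℂ))
    (hbc2 : (μ₂ : ℂ) * g a₂ = Complex.I * ω * θ a₂) :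
    ∃! p : ℝ × ℝ, a₁ ≤ p.1 ∧ p.1 ≤ p.2 ∧ p.2 ≤ a₂ ∧
      (∀ x ∈ Set.Icc a₁ a₂, x < p.1 → ((starRingEnd ℂ) (θ x) * g x).im < 0) ∧
      (∀ x ∈ Set.Icc p.1 p.2, ((starRingEnd ℂ) (θ x) * g x).im = 0) ∧
      (∀ x ∈ Set.Icc a₁ a₂, p.2 < x → 0 < ((starRingEnd ℂ) (θ x) * g x).im) := by
  have hab := h12.le
  have hgI : IntervalIntegrable g volume a₁ a₂ :=
    (hgC.mono (uIcc_of_le hab).subset).intervalIntegrable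
  have hwI : IntervalIntegrable (fun t => -(ω ^ 2) * (B t : ℂ) * θ t) volume a₁ a₂ := by
    have : IntegrableOn (fun t => -(ω ^ 2) * ((B t : ℂ) * θ t)) (uIcc a₁ a₂) := by
      rw [uIcc_of_le hab]; exact hint.const_mul _
    simpa only [mul_assoc] using this.intervalIntegrable
  have hω2 : (ω ^ 2).im ≤ 0 := by
    rw [sq, Complex.mul_im]; nlinarith
  have hflux : ∀ᵐ t ∂volume.restrict (Icc a₁ a₂),
      0 ≤ (conj (θ t) * (-(ω ^ 2) * (B t : ℂ) * θ t)).im := by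
    filter_upwards [hB0] with t ht
    rw [show conj (θ t) * (-(ω ^ 2) * (B t : ℂ) * θ t) = -(ω ^ 2) * (B t * (conj (θ t) * θ t)) by
      ring, Complex.conj_mul', ← Complex.ofReal_pow, ← Complex.ofReal_mul, Complex.im_mul_ofReal,
      Complex.neg_im]
    exact mul_nonneg (neg_nonneg.2 hω2) (mul_nonneg ht (sq_nonneg _))
  have hF := absolutelyContinuousOnInterval_im_conj_mul hab hgI hwI hθ hg
  refine (monotoneOn_im_conj_mul hab hgI hwI hθ hg hflux).existsUnique_isTurningInterval hab
    ?_ ?_ (im_conj_mul_nonneg_of_ofReal_mul_eq hμ₂ hre hbc2)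
  · simpa only [uIcc_of_le hab] using hF.continuousOn
  · simpa [hic0, hic1] using mul_nonneg hre.le hν₁

/-- Existence and uniqueness of the turning interval `[x₊, x⁺]` for a mode `θ`
associated with a quasi-eigenvalue `ω` with `Re ω > 0`, `Im ω < 0`. -/
theorem stmt9 (a₁ a₂ : ℝ) (h12 : a₁ < a₂) (B : ℝ → ℝ)
    (hBint : MeasureTheory.IntegrableOn B (Set.Icc a₁ a₂))
    (hB0 : ∀ᵐ x ∂(MeasureTheory.volume.restrict (Set.Icc a₁ a₂)), 0 ≤ B x)
    (ν₁ μ₂ : ℝ) (hν₁ : 0 ≤ ν₁) (hμ₂ : 0 ≤ μ₂)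
    (ω : ℂ) (hre : 0 < ω.re) (him : ω.im < 0)
    (θ g : ℝ → ℂ)
    (hθC : ContinuousOn θ (Set.Icc a₁ a₂)) (hgC : ContinuousOn g (Set.Icc a₁ a₂))
    (hint : MeasureTheory.IntegrableOn (fun t => (B t : ℂ) * θ t) (Set.Icc a₁ a₂))
    (hθ : ∀ x ∈ Set.Icc a₁ a₂, θ x = θ a₁ + ∫ t in a₁..x, g t)
    (hg : ∀ x ∈ Set.Icc a₁ a₂, g x = g a₁ + ∫ t in a₁..x, -(ω ^ 2) * (B t : ℂ) * θ t)
    (hic0 : θ a₁ = 1) (hic1 : g a₁ = -Complex.I * ω * (ν₁ : ℂ))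
    (hbc2 : (μ₂ : ℂ) * g a₂ = Complex.I * ω * θ a₂) :
    ∃! p : ℝ × ℝ, a₁ ≤ p.1 ∧ p.1 ≤ p.2 ∧ p.2 ≤ a₂ ∧
      (∀ x ∈ Set.Icc a₁ a₂, x < p.1 → ((starRingEnd ℂ) (θ x) * g x).im < 0) ∧
      (∀ x ∈ Set.Icc p.1 p.2, ((starRingEnd ℂ) (θ x) * g x).im = 0) ∧
      (∀ x ∈ Set.Icc a₁ a₂, p.2 < x → 0 < ((starRingEnd ℂ) (θ x) * g x).im) :=
  stmt9_general a₁ a₂ h12 B hB0 ν₁ μ₂ hν₁ hμ₂ ω hre him θ g hgC hint hθ hg hic0 hic1 hbc2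
end

section
/- In the setting of the turning interval [x₊, x⁺] for a mode θ with Re ω > 0: if x₊ < x⁺ then B = 0 a.e. on (x₊, x⁺) and θ' is constant on [x₊, x⁺]. In particular, if B > 0 a.e. on (a₁,a₂) then x₊ = x⁺. -/
/-!
On the turning interval `Im (conj θ * θ') ≡ 0`, while by Lebesgue differentiation
`(conj θ * θ')' = |θ'|² - ω² B |θ|²` almost everywhere; since `Im (-ω²) ≠ 0` this forces
`B |θ|² = 0` a.e. there. Hence `θ'' = -ω² B θ` vanishes a.e., `θ'` is constant and `θ` is affine.
A Gronwall argument shows that the Cauchy data `(θ, θ')` of a solution with `θ a₁ = 1` vanish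
nowhere, so the affine `θ` has at most one zero and `B = 0` a.e.
-/

open MeasureTheory Set Filter Topology ComplexConjugate

section Primitive

variable {E : Type*} [NormedAddCommGroup E] [NormedSpace ℝ E] {u f : ℝ → E} {a b s t : ℝ}

theorem eq_add_integral_of_eq_add_integral (hf : IntegrableOn f (Icc a b))
    (hu : ∀ x ∈ Icc a b, u x = u a + ∫ t in a..x, f t) {x y : ℝ}
    (hx : x ∈ Icc a b) (hy : y ∈ Icc a b) :
    u y = u x + ∫ t in x..y, f t := by
  have hint : ∀ z ∈ Icc a b, IntervalIntegrable f volume a z := fun z hz =>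
    (hf.mono_set (uIcc_subset_Icc (left_mem_Icc.2 (hz.1.trans hz.2)) hz)).intervalIntegrable
  rw [hu y hy, hu x hx, ← intervalIntegral.integral_interval_sub_left (hint y hy) (hint x hx)]
  abel

theorem hasDerivAt_of_eq_add_integral [CompleteSpace E] (hf : ContinuousOn f (Icc a b))
    (hu : ∀ x ∈ Icc a b, u x = u a + ∫ t in a..x, f t) {x : ℝ} (hx : x ∈ Ioo a b) :
    HasDerivAt u (f x) x := by
  have hnhds : Icc a b ∈ 𝓝 x := Icc_mem_nhds hx.1 hx.2
  have hprim : HasDerivAt (fun y => ∫ t in a..y, f t) (f x) x :=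
    intervalIntegral.integral_hasDerivAt_right
      ((hf.mono (uIcc_subset_Icc (left_mem_Icc.2 (hx.1.trans hx.2).le)
        (Ioo_subset_Icc_self hx))).intervalIntegrable)
      ((hf.mono Ioo_subset_Icc_self).stronglyMeasurableAtFilter isOpen_Ioo x hx)
      (hf.continuousAt hnhds)
  exact (hprim.const_add (u a)).congr_of_eventuallyEq (eventually_of_mem hnhds hu)

theorem ae_hasDerivAt_of_eq_add_integral [CompleteSpace E] (hf : IntegrableOn f (Icc a b))
    (hu : ∀ x ∈ Icc a b, u x = u a + ∫ t in a..x, f t) :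
    ∀ᵐ x, x ∈ Ioo a b → HasDerivAt u (f x) x := by
  rcases le_or_gt a b with hab | hab
  · have hf' : IntervalIntegrable f volume a b := by
      rwa [intervalIntegrable_iff_integrableOn_Icc_of_le hab]
    filter_upwards [hf'.ae_hasDerivAt_integral] with x hderiv hx
    have hnhds : Icc a b ∈ 𝓝 x := Icc_mem_nhds hx.1 hx.2
    refine ((hderiv (by rw [uIcc_of_le hab]; exact Ioo_subset_Icc_self hx) a
      left_mem_uIcc).const_add (u a)).congr_of_eventuallyEq (eventually_of_mem hnhds hu)
  · exact Eventually.of_forall fun x hx => absurd (hx.1.trans hx.2) (not_lt.2 hab.le)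

theorem eq_of_eq_add_integral_of_ae_eq_zero (hf : IntegrableOn f (Icc a b))
    (hu : ∀ x ∈ Icc a b, u x = u a + ∫ t in a..x, f t) (has : a ≤ s) (htb : t ≤ b)
    (h0 : ∀ᵐ x ∂volume.restrict (Ioo s t), f x = 0) :
    ∀ x ∈ Icc s t, u x = u s := by
  intro x hx
  have hIcc : ∀ y ∈ Icc s t, y ∈ Icc a b := fun y hy => ⟨has.trans hy.1, hy.2.trans htb⟩
  rw [eq_add_integral_of_eq_add_integral hf hu (hIcc s (left_mem_Icc.2 (hx.1.trans hx.2)))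
    (hIcc x hx), intervalIntegral.integral_of_le hx.1, integral_eq_zero_of_ae, add_zero]
  rw [Measure.restrict_congr_set Ioo_ae_eq_Ioc] at h0
  exact ae_restrict_of_ae_restrict_of_subset (Ioc_subset_Ioc_right hx.2) h0

theorem eq_add_smul_of_eq_add_integral [CompleteSpace E] (hf : IntegrableOn f (Icc a b))
    (hu : ∀ x ∈ Icc a b, u x = u a + ∫ t in a..x, f t) (has : a ≤ s) (htb : t ≤ b)
    (hconst : ∀ x ∈ Icc s t, f x = f s) :
    ∀ x ∈ Icc s t, u x = u s + (x - s) • f s := by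
  intro x hx
  have hIcc : ∀ y ∈ Icc s t, y ∈ Icc a b := fun y hy => ⟨has.trans hy.1, hy.2.trans htb⟩
  rw [eq_add_integral_of_eq_add_integral hf hu (hIcc s (left_mem_Icc.2 (hx.1.trans hx.2)))
    (hIcc x hx), intervalIntegral.integral_congr (g := fun _ => f s),
    intervalIntegral.integral_const]
  intro y hy
  rw [uIcc_of_le hx.1] at hy
  exact hconst y ⟨hy.1, hy.2.trans hx.2⟩

end Primitive

theorem hasDerivAt_im_conj_mul {θ g : ℝ → ℂ} {q : ℂ} {x : ℝ} (hθ : HasDerivAt θ (g x) x)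
    (hg : HasDerivAt g (q * θ x) x) :
    HasDerivAt (fun y => (conj (θ y) * g y).im) (q.im * Complex.normSq (θ x)) x := by
  have hconj : HasDerivAt (fun y => conj (θ y)) (conj (g x)) x := by
    simpa only [starRingEnd_apply] using hθ.star
  refine ((Complex.imCLM.hasFDerivAt).comp_hasDerivAt x (hconj.mul hg)).congr_deriv ?_
  have hg2 : conj (g x) * g x = (Complex.normSq (g x) : ℂ) := Complex.normSq_eq_conj_mul_self.symm
  have hθ2 : conj (θ x) * θ x = (Complex.normSq (θ x) : ℂ) := Complex.normSq_eq_conj_mul_self.symm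
  rw [Complex.imCLM_apply, show conj (θ x) * (q * θ x) = q * (conj (θ x) * θ x) by ring, hg2, hθ2,
    Complex.add_im, Complex.ofReal_im, Complex.im_mul_ofReal, zero_add]

theorem ae_im_mul_normSq_eq_zero {θ g q : ℝ → ℂ} {c d : ℝ}
    (hθ : ∀ x ∈ Ioo c d, HasDerivAt θ (g x) x)
    (hg : ∀ᵐ x, x ∈ Ioo c d → HasDerivAt g (q x * θ x) x)
    (hzero : ∀ x ∈ Ioo c d, (conj (θ x) * g x).im = 0) :
    ∀ᵐ x, x ∈ Ioo c d → (q x).im * Complex.normSq (θ x) = 0 := by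
  filter_upwards [hg] with x hgx hx
  have hconst : (fun y => (conj (θ y) * g y).im) =ᶠ[𝓝 x] fun _ => 0 :=
    eventually_of_mem (isOpen_Ioo.mem_nhds hx) hzero
  exact (hasDerivAt_im_conj_mul (hθ x hx) (hgx hx)).unique
    ((hasDerivAt_const x (0 : ℝ)).congr_of_eventuallyEq hconst)

section Gronwall

variable {K w : ℝ → ℝ} {a b : ℝ}

theorem integral_mul_eq_zero_of_eqOn_Ioc {c : ℝ} (hcb : c ≤ b) (hw : EqOn w 0 (Ioc c b)) :
    ∫ t in c..b, K t * w t = 0 := by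
  rw [intervalIntegral.integral_of_le hcb]
  exact setIntegral_eq_zero_of_forall_eq_zero fun t ht => by simp [hw ht]

theorem exists_lt_eqOn_zero_of_le_integral_mul (hK : IntegrableOn K (Icc a b))
    (hK0 : ∀ x ∈ Icc a b, 0 ≤ K x) (hw : ContinuousOn w (Icc a b))
    (hw0 : ∀ x ∈ Icc a b, 0 ≤ w x) (hle : ∀ x ∈ Icc a b, w x ≤ ∫ t in x..b, K t * w t)
    {c : ℝ} (hac : a < c) (hcb : c ≤ b) (hc : EqOn w 0 (Icc c b)) :
    ∃ d ∈ Ico a c, EqOn w 0 (Icc d b) := by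
  have hKc : IntegrableOn K (Icc a c) := hK.mono_set (Icc_subset_Icc_right hcb)
  have hlim : Tendsto (fun x => ∫ t in x..c, K t) (𝓝[<] c) (𝓝 0) := by
    have hcont := intervalIntegral.continuousOn_primitive_interval_left
      (μ := volume) (by rwa [uIcc_of_le hac.le])
    rw [uIcc_of_le hac.le] at hcont
    have := (hcont c (right_mem_Icc.2 hac.le)).tendsto
    rw [intervalIntegral.integral_same, ← nhdsWithin_Ioo_eq_nhdsLT hac] at *
    exact this.mono_left (nhdsWithin_mono _ Ioo_subset_Icc_self)
  obtain ⟨d, hdK, hd⟩ : ∃ d, ∫ t in d..c, K t < 1 / 2 ∧ d ∈ Ioo a c :=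
    ((hlim.eventually (gt_mem_nhds one_half_pos)).and (Ioo_mem_nhdsLT hac)).exists
  have hdc : Icc d c ⊆ Icc a b := Icc_subset_Icc hd.1.le hcb
  obtain ⟨z, hz, hzmax⟩ := isCompact_Icc.exists_isMaxOn (nonempty_Icc.2 hd.2.le) (hw.mono hdc)
  have hKw : IntegrableOn (fun t => K t * w t) (Icc a b) := hK.mul_continuousOn hw isCompact_Icc
  have hbound : ∀ x ∈ Icc d c, w x ≤ w z * (1 / 2) := by
    intro x hx
    have hxc : uIcc x c ⊆ Icc a b := uIcc_subset_Icc (hdc hx) (hdc ⟨hd.2.le, le_rfl⟩)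
    have hsplit : ∫ t in x..b, K t * w t = ∫ t in x..c, K t * w t := by
      rw [← intervalIntegral.integral_add_adjacent_intervals (b := c)
        (hKw.mono_set hxc).intervalIntegrable
        ((hKw.mono_set (uIcc_subset_Icc ⟨hac.le, hcb⟩
          (right_mem_Icc.2 (hac.le.trans hcb)))).intervalIntegrable),
        integral_mul_eq_zero_of_eqOn_Ioc hcb (hc.mono Ioc_subset_Icc_self), add_zero]
    calc w x ≤ ∫ t in x..c, K t * w t := hsplit ▸ hle x (hdc hx)
      _ ≤ ∫ t in x..c, K t * w z :=
          intervalIntegral.integral_mono_on hx.2 (hKw.mono_set hxc).intervalIntegrable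
            ((hK.mono_set hxc).intervalIntegrable.mul_const _) fun t ht =>
              mul_le_mul_of_nonneg_left (hzmax ⟨hx.1.trans ht.1, ht.2⟩)
                (hK0 t (hdc ⟨hx.1.trans ht.1, ht.2⟩))
      _ = w z * ∫ t in x..c, K t := by rw [intervalIntegral.integral_mul_const, mul_comm]
      _ ≤ w z * ∫ t in d..c, K t := by
          refine mul_le_mul_of_nonneg_left (intervalIntegral.integral_mono_interval hx.1 hx.2
            le_rfl ?_ (hKc.mono_set (uIcc_subset_Icc ⟨hd.1.le, hd.2.le⟩
              (right_mem_Icc.2 hac.le))).intervalIntegrable) (hw0 z (hdc hz))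
          exact (ae_restrict_iff' measurableSet_Ioc).2 (Eventually.of_forall fun t ht =>
            hK0 t (hdc ⟨ht.1.le, ht.2⟩))
      _ ≤ w z * (1 / 2) := mul_le_mul_of_nonneg_left hdK.le (hw0 z (hdc hz))
  have hwz : w z ≤ 0 := by linarith [hbound z hz, hw0 z (hdc hz)]
  refine ⟨d, ⟨hd.1.le, hd.2⟩, fun y hy => ?_⟩
  rcases le_or_gt y c with hyc | hcy
  · exact le_antisymm ((hzmax ⟨hy.1, hyc⟩).trans hwz) (hw0 y (hdc ⟨hy.1, hyc⟩))
  · exact hc ⟨hcy.le, hy.2⟩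

theorem eqOn_zero_of_le_integral_mul (hK : IntegrableOn K (Icc a b))
    (hK0 : ∀ x ∈ Icc a b, 0 ≤ K x) (hw : ContinuousOn w (Icc a b))
    (hw0 : ∀ x ∈ Icc a b, 0 ≤ w x) (hle : ∀ x ∈ Icc a b, w x ≤ ∫ t in x..b, K t * w t) :
    EqOn w 0 (Icc a b) := by
  set A := {x ∈ Icc a b | EqOn w 0 (Icc x b)}
  rcases lt_or_ge b a with hba | hab
  · intro x hx
    exact absurd (hx.1.trans hx.2) (not_le.2 hba)
  have hbA : b ∈ A := by
    refine ⟨right_mem_Icc.2 hab, fun y hy => ?_⟩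
    obtain rfl : y = b := le_antisymm hy.2 hy.1
    have := hle y (right_mem_Icc.2 hab)
    rw [intervalIntegral.integral_same] at this
    exact le_antisymm this (hw0 y (right_mem_Icc.2 hab))
  have hbdd : BddBelow A := ⟨a, fun x hx => hx.1.1⟩
  have hcI : sInf A ∈ Icc a b := ⟨le_csInf ⟨b, hbA⟩ fun x hx => hx.1.1, csInf_le hbdd hbA⟩
  have hcA : sInf A ∈ A := by
    have hIoc : EqOn w 0 (Ioc (sInf A) b) := fun y hy => by
      obtain ⟨x, hxA, hxy⟩ := (csInf_lt_iff hbdd ⟨b, hbA⟩).1 hy.1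
      exact hxA.2 ⟨hxy.le, hy.2⟩
    refine ⟨hcI, fun y hy => ?_⟩
    rcases hy.1.eq_or_lt with rfl | hlt
    · exact le_antisymm ((hle _ hcI).trans_eq (integral_mul_eq_zero_of_eqOn_Ioc hcI.2 hIoc))
        (hw0 _ hcI)
    · exact hIoc ⟨hlt, hy.2⟩
  rcases hcI.1.eq_or_lt with hac | hac
  · exact hac ▸ hcA.2
  · obtain ⟨d, hd, hdw⟩ :=
      exists_lt_eqOn_zero_of_le_integral_mul hK hK0 hw hw0 hle hac hcI.2 hcA.2
    exact absurd (csInf_le hbdd ⟨⟨hd.1, hd.2.le.trans hcI.2⟩, hdw⟩) (not_le.2 hd.2)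

end Gronwall

theorem eqOn_zero_of_eq_integral {a c : ℝ} {q θ g : ℝ → ℂ} (hq : IntegrableOn q (Icc a c))
    (hθC : ContinuousOn θ (Icc a c)) (hgC : ContinuousOn g (Icc a c))
    (hθ : ∀ x ∈ Icc a c, θ x = ∫ t in c..x, g t)
    (hg : ∀ x ∈ Icc a c, g x = ∫ t in c..x, q t * θ t) :
    EqOn θ 0 (Icc a c) := by
  have hwC : ContinuousOn (fun t => ‖θ t‖ + ‖g t‖) (Icc a c) := hθC.norm.add hgC.norm
  have hK : IntegrableOn (fun t => 1 + ‖q t‖) (Icc a c) :=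
    (integrableOn_const measure_Icc_lt_top.ne).add hq.norm
  have hqθ : IntegrableOn (fun t => ‖q t‖ * ‖θ t‖) (Icc a c) :=
    IntegrableOn.mul_continuousOn hq.norm hθC.norm isCompact_Icc
  have hKw : IntegrableOn (fun t => (1 + ‖q t‖) * (‖θ t‖ + ‖g t‖)) (Icc a c) :=
    hK.mul_continuousOn hwC isCompact_Icc
  have hle : ∀ x ∈ Icc a c,
      ‖θ x‖ + ‖g x‖ ≤ ∫ t in x..c, (1 + ‖q t‖) * (‖θ t‖ + ‖g t‖) := by
    intro x hx
    have hsub : uIcc x c ⊆ Icc a c := uIcc_subset_Icc hx (right_mem_Icc.2 (hx.1.trans hx.2))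
    have hgx : IntervalIntegrable (fun t => ‖g t‖) volume x c :=
      (hgC.norm.mono hsub).intervalIntegrable
    have hqθx : IntervalIntegrable (fun t => ‖q t‖ * ‖θ t‖) volume x c :=
      (hqθ.mono_set hsub).intervalIntegrable
    calc ‖θ x‖ + ‖g x‖
        ≤ (∫ t in x..c, ‖g t‖) + ∫ t in x..c, ‖q t‖ * ‖θ t‖ := by
          rw [hθ x hx, hg x hx, intervalIntegral.integral_symm x, intervalIntegral.integral_symm x,
            norm_neg, norm_neg]
          refine add_le_add (intervalIntegral.norm_integral_le_integral_norm hx.2)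
            ((intervalIntegral.norm_integral_le_integral_norm hx.2).trans_eq ?_)
          simp only [norm_mul]
      _ = ∫ t in x..c, (‖g t‖ + ‖q t‖ * ‖θ t‖) := (intervalIntegral.integral_add hgx hqθx).symm
      _ ≤ ∫ t in x..c, (1 + ‖q t‖) * (‖θ t‖ + ‖g t‖) :=
          intervalIntegral.integral_mono_on hx.2 (hgx.add hqθx)
            (hKw.mono_set hsub).intervalIntegrable
            fun t _ => by nlinarith [norm_nonneg (q t), norm_nonneg (θ t), norm_nonneg (g t)]
  intro x hx
  have := eqOn_zero_of_le_integral_mul hK (fun t _ => by positivity) hwC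
    (fun t _ => by positivity) hle hx
  simp only [Pi.zero_apply] at this ⊢
  exact norm_eq_zero.1 (le_antisymm (by linarith [norm_nonneg (g x)]) (norm_nonneg _))

theorem subsingleton_setOf_add_sub_smul_eq_zero {E : Type*} [AddCommGroup E] [Module ℝ E]
    [NoZeroSMulDivisors ℝ E] {p v : E} (h : p ≠ 0 ∨ v ≠ 0) (s : ℝ) :
    {x : ℝ | p + (x - s) • v = 0}.Subsingleton := by
  intro x hx y hy
  have hxy : (x - y) • v = 0 := by
    rw [show x - y = (x - s) - (y - s) by ring, sub_smul]
    exact sub_eq_zero.2 (add_left_cancel (hx.trans hy.symm))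
  rcases smul_eq_zero.1 hxy with hxy | hv
  · exact sub_eq_zero.1 hxy
  · simp only [hv, smul_zero, add_zero] at hx
    exact absurd hv (h.resolve_left (not_not.2 hx))

section Turning

variable {a b s t : ℝ} {B : ℝ → ℝ} {c : ℂ} {θ g : ℝ → ℂ}

theorem integrableOn_mul_ofReal_mul (hBint : IntegrableOn B (Icc a b))
    (hθC : ContinuousOn θ (Icc a b)) :
    IntegrableOn (fun t => c * (B t : ℂ) * θ t) (Icc a b) :=
  IntegrableOn.mul_continuousOn (hBint.ofReal.const_mul c) hθC isCompact_Icc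

theorem ae_ofReal_mul_eq_zero_of_im_conj_mul_eq_zero (hc : c.im ≠ 0)
    (hBint : IntegrableOn B (Icc a b)) (hθC : ContinuousOn θ (Icc a b))
    (hgC : ContinuousOn g (Icc a b))
    (hθ : ∀ x ∈ Icc a b, θ x = θ a + ∫ t in a..x, g t)
    (hg : ∀ x ∈ Icc a b, g x = g a + ∫ t in a..x, c * (B t : ℂ) * θ t)
    (has : a ≤ s) (htb : t ≤ b) (hzero : ∀ x ∈ Icc s t, (conj (θ x) * g x).im = 0) :
    ∀ᵐ x ∂volume.restrict (Ioo s t), (B x : ℂ) * θ x = 0 := by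
  have hsub : Ioo s t ⊆ Ioo a b := Ioo_subset_Ioo has htb
  have h := ae_im_mul_normSq_eq_zero (q := fun x => c * B x)
    (fun x hx => hasDerivAt_of_eq_add_integral hgC hθ (hsub hx))
    (by
      filter_upwards [ae_hasDerivAt_of_eq_add_integral (integrableOn_mul_ofReal_mul hBint hθC) hg]
        with x hx hxs using hx (hsub hxs))
    (fun x hx => hzero x (Ioo_subset_Icc_self hx))
  rw [ae_restrict_iff' measurableSet_Ioo]
  filter_upwards [h] with x hx hxs
  rw [Complex.im_mul_ofReal, mul_assoc] at hx
  rcases mul_eq_zero.1 ((mul_eq_zero.1 (hx hxs)).resolve_left hc) with hB | hθx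
  · simp [hB]
  · simp [Complex.normSq_eq_zero.1 hθx]

theorem apply_ne_zero_or_ne_zero (hBint : IntegrableOn B (Icc a b))
    (hθC : ContinuousOn θ (Icc a b)) (hgC : ContinuousOn g (Icc a b))
    (hθ : ∀ x ∈ Icc a b, θ x = θ a + ∫ t in a..x, g t)
    (hg : ∀ x ∈ Icc a b, g x = g a + ∫ t in a..x, c * (B t : ℂ) * θ t)
    (hθa : θ a ≠ 0) (hs : s ∈ Icc a b) : θ s ≠ 0 ∨ g s ≠ 0 := by
  by_contra! h0
  have hsub : Icc a s ⊆ Icc a b := Icc_subset_Icc_right hs.2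
  have hrep : ∀ {u f : ℝ → ℂ}, IntegrableOn f (Icc a b) →
      (∀ x ∈ Icc a b, u x = u a + ∫ t in a..x, f t) → u s = 0 →
      ∀ x ∈ Icc a s, u x = ∫ t in s..x, f t := fun hf hu hus x hx => by
    rw [eq_add_integral_of_eq_add_integral hf hu hs (hsub hx), hus, zero_add]
  have hq : IntegrableOn (fun t => c * (B t : ℂ)) (Icc a s) :=
    IntegrableOn.mono_set (hBint.ofReal.const_mul c) hsub
  exact hθa (eqOn_zero_of_eq_integral hq (hθC.mono hsub) (hgC.mono hsub)
    (hrep hgC.integrableOn_Icc hθ h0.1)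
    (hrep (integrableOn_mul_ofReal_mul hBint hθC) hg h0.2) (left_mem_Icc.2 hs.1))

theorem ae_eq_zero_and_eqOn_of_im_conj_mul_eq_zero (hc : c.im ≠ 0)
    (hBint : IntegrableOn B (Icc a b)) (hθC : ContinuousOn θ (Icc a b))
    (hgC : ContinuousOn g (Icc a b))
    (hθ : ∀ x ∈ Icc a b, θ x = θ a + ∫ t in a..x, g t)
    (hg : ∀ x ∈ Icc a b, g x = g a + ∫ t in a..x, c * (B t : ℂ) * θ t)
    (hθa : θ a ≠ 0) (has : a ≤ s) (hst : s ≤ t) (htb : t ≤ b)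
    (hzero : ∀ x ∈ Icc s t, (conj (θ x) * g x).im = 0) :
    (∀ᵐ x ∂volume.restrict (Ioo s t), B x = 0) ∧ ∀ x ∈ Icc s t, g x = g s := by
  have hBθ := ae_ofReal_mul_eq_zero_of_im_conj_mul_eq_zero hc hBint hθC hgC hθ hg has htb hzero
  have hgconst : ∀ x ∈ Icc s t, g x = g s := eq_of_eq_add_integral_of_ae_eq_zero
    (integrableOn_mul_ofReal_mul hBint hθC) hg has htb (by
      filter_upwards [hBθ] with x hx
      rw [mul_assoc, hx, mul_zero])
  have hθaff := eq_add_smul_of_eq_add_integral hgC.integrableOn_Icc hθ has htb hgconst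
  have hzeros : {x | θ x = 0} ∩ Ioo s t ⊆ {x : ℝ | θ s + (x - s) • g s = 0} :=
    fun x hx => (hθaff x (Ioo_subset_Icc_self hx.2)).symm.trans hx.1
  have hθne : ∀ᵐ x ∂volume.restrict (Ioo s t), θ x ≠ 0 := by
    rw [ae_iff, Measure.restrict_apply' measurableSet_Ioo]
    simp only [not_not]
    exact measure_mono_null hzeros ((subsingleton_setOf_add_sub_smul_eq_zero
      (apply_ne_zero_or_ne_zero hBint hθC hgC hθ hg hθa ⟨has, hst.trans htb⟩) s).measure_zero _)
  refine ⟨?_, hgconst⟩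
  filter_upwards [hBθ, hθne] with x hx hθx
  exact_mod_cast (mul_eq_zero.1 hx).resolve_right hθx

end Turning

theorem stmt10_general (a₁ a₂ : ℝ) (B : ℝ → ℝ)
    (hBint : MeasureTheory.IntegrableOn B (Set.Icc a₁ a₂))
    (ω : ℂ) (hre : 0 < ω.re) (him : ω.im < 0)
    (θ g : ℝ → ℂ)
    (hθC : ContinuousOn θ (Set.Icc a₁ a₂)) (hgC : ContinuousOn g (Set.Icc a₁ a₂))
    (hθ : ∀ x ∈ Set.Icc a₁ a₂, θ x = θ a₁ + ∫ t in a₁..x, g t)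
    (hg : ∀ x ∈ Set.Icc a₁ a₂, g x = g a₁ + ∫ t in a₁..x, -(ω ^ 2) * (B t : ℂ) * θ t)
    (hic0 : θ a₁ = 1)
    (xs xt : ℝ) (hxs : a₁ ≤ xs) (hxst : xs ≤ xt) (hxt : xt ≤ a₂)
    (hzero : ∀ x ∈ Set.Icc xs xt, ((starRingEnd ℂ) (θ x) * g x).im = 0) :
    (xs < xt →
      (∀ᵐ x ∂(MeasureTheory.volume.restrict (Set.Ioo xs xt)), B x = 0) ∧
      (∀ x ∈ Set.Icc xs xt, g x = g xs)) ∧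
    ((∀ᵐ x ∂(MeasureTheory.volume.restrict (Set.Icc a₁ a₂)), 0 < B x) → xs = xt) := by
  have hω : (-(ω ^ 2)).im ≠ 0 := by
    rw [Complex.neg_im, pow_two, Complex.mul_im]
    nlinarith
  have hflat := ae_eq_zero_and_eqOn_of_im_conj_mul_eq_zero hω hBint hθC hgC hθ hg
    (by simp [hic0]) hxs hxst hxt hzero
  refine ⟨fun _ => hflat, fun hBpos => ?_⟩
  by_contra hne
  have hIoo : volume.restrict (Ioo xs xt) ≠ 0 := by
    simp [Measure.restrict_eq_zero, hxst.lt_of_ne hne]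
  refine hIoo (ae_eq_bot.1 (eventually_false_iff_eq_bot.1 ?_))
  filter_upwards [hflat.1, ae_restrict_of_ae_restrict_of_subset
    (Ioo_subset_Icc_self.trans (Icc_subset_Icc hxs hxt)) hBpos] with x hB0 hBpos
  exact hBpos.ne' hB0

/-- On the turning interval: if `x₊ < x⁺` then `B = 0` a.e. on `(x₊,x⁺)` and `θ'` is
constant there; in particular `B > 0` a.e. forces `x₊ = x⁺`. -/
theorem stmt10 (a₁ a₂ : ℝ) (h12 : a₁ < a₂) (B : ℝ → ℝ)
    (hBint : MeasureTheory.IntegrableOn B (Set.Icc a₁ a₂))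
    (hB0 : ∀ᵐ x ∂(MeasureTheory.volume.restrict (Set.Icc a₁ a₂)), 0 ≤ B x)
    (ν₁ μ₂ : ℝ) (hν₁ : 0 ≤ ν₁) (hμ₂ : 0 ≤ μ₂)
    (ω : ℂ) (hre : 0 < ω.re) (him : ω.im < 0)
    (θ g : ℝ → ℂ)
    (hθC : ContinuousOn θ (Set.Icc a₁ a₂)) (hgC : ContinuousOn g (Set.Icc a₁ a₂))
    (hint : MeasureTheory.IntegrableOn (fun t => (B t : ℂ) * θ t) (Set.Icc a₁ a₂))
    (hθ : ∀ x ∈ Set.Icc a₁ a₂, θ x = θ a₁ + ∫ t in a₁..x, g t)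
    (hg : ∀ x ∈ Set.Icc a₁ a₂, g x = g a₁ + ∫ t in a₁..x, -(ω ^ 2) * (B t : ℂ) * θ t)
    (hic0 : θ a₁ = 1) (hic1 : g a₁ = -Complex.I * ω * (ν₁ : ℂ))
    (hbc2 : (μ₂ : ℂ) * g a₂ = Complex.I * ω * θ a₂)
    (xs xt : ℝ) (hxs : a₁ ≤ xs) (hxst : xs ≤ xt) (hxt : xt ≤ a₂)
    (hneg : ∀ x ∈ Set.Icc a₁ a₂, x < xs → ((starRingEnd ℂ) (θ x) * g x).im < 0)
    (hzero : ∀ x ∈ Set.Icc xs xt, ((starRingEnd ℂ) (θ x) * g x).im = 0)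
    (hpos : ∀ x ∈ Set.Icc a₁ a₂, xt < x → 0 < ((starRingEnd ℂ) (θ x) * g x).im) :
    (xs < xt →
      (∀ᵐ x ∂(MeasureTheory.volume.restrict (Set.Ioo xs xt)), B x = 0) ∧
      (∀ x ∈ Set.Icc xs xt, g x = g xs)) ∧
    ((∀ᵐ x ∂(MeasureTheory.volume.restrict (Set.Icc a₁ a₂)), 0 < B x) → xs = xt) :=
  stmt10_general a₁ a₂ B hBint ω hre him θ g hθC hgC hθ hg hic0 xs xt hxs hxst hxt hzero
end

section
/- If ω = iζ is a nonlinear eigenvalue (i.e., there is a nontrivial y ∈ W^{2,1} with y'' = -ω² y [b₁+(b₂-b₁)χ_{ℂ₊}(y²)] and the radiation boundary conditions), then ω₁ = i·conj(ζ) is also a nonlinear eigenvalue, with eigenfunction y₁ = i·conj(y). More generally, the set Σ^{nl} of nonlinear eigenvalues is symmetric with respect to the imaginary axis: ω ∈ Σ^{nl} implies -conj(ω) ∈ Σ^{nl}. -/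
/- The map `z ↦ i · conj z` is ℝ-linear, sends `z²` to `-conj (z²)` (so it preserves `Im (z²)`
and hence the switching term `χ_{ℂ₊}(y²)`), and turns `ω² y` into `(-conj ω)² (i · conj y)`;
together with `conj i = -i` this carries the equation and both radiation conditions for `ω` to
those for `-conj ω`. -/

open MeasureTheory Set ComplexConjugate

/-- Indicator function of the open upper half-plane `ℂ₊`. -/
noncomputable def chiC (w : ℂ) : ℝ := if 0 < w.im then 1 else 0

/-- `y` (with derivative `g`) is a nontrivial solution of the bang-bang nonlinear equation
`y'' = -ω² y [b₁ + (b₂-b₁) χ_{ℂ₊}(y²)]` on `(a₁,a₂)` with the radiation boundary conditions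
(`μ₂ = 1/ν₂`, with `μ₂ = 0` encoding `ν₂ = ∞`). -/
def IsNLMode (a₁ a₂ : ℝ) (b₁ b₂ : ℝ → ℝ) (ν₁ μ₂ : ℝ) (ω : ℂ) (y g : ℝ → ℂ) : Prop :=
  ContinuousOn y (Set.Icc a₁ a₂) ∧ ContinuousOn g (Set.Icc a₁ a₂) ∧
  MeasureTheory.IntegrableOn
    (fun t => ((b₁ t + (b₂ t - b₁ t) * chiC (y t ^ 2) : ℝ) : ℂ) * y t) (Set.Icc a₁ a₂) ∧
  (∀ x ∈ Set.Icc a₁ a₂, y x = y a₁ + ∫ t in a₁..x, g t) ∧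
  (∀ x ∈ Set.Icc a₁ a₂,
    g x = g a₁ + ∫ t in a₁..x, -(ω ^ 2) * ((b₁ t + (b₂ t - b₁ t) * chiC (y t ^ 2) : ℝ) : ℂ) * y t) ∧
  g a₁ = -Complex.I * ω * (ν₁ : ℂ) * y a₁ ∧
  (μ₂ : ℂ) * g a₂ = Complex.I * ω * y a₂ ∧
  ∃ x ∈ Set.Icc a₁ a₂, y x ≠ 0

lemma im_I_mul_conj_sq (z : ℂ) : ((Complex.I * conj z) ^ 2).im = (z ^ 2).im := by
  have h : (Complex.I * conj z) ^ 2 = -conj (z ^ 2) := by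
    rw [mul_pow, Complex.I_sq, map_pow]; ring
  rw [h, Complex.neg_im, Complex.conj_im, neg_neg]

lemma chiC_I_mul_conj_sq (z : ℂ) : chiC ((Complex.I * conj z) ^ 2) = chiC (z ^ 2) := by
  simp only [chiC, im_I_mul_conj_sq]

lemma I_mul_conj_ofReal_mul (r : ℝ) (z : ℂ) :
    Complex.I * conj ((r : ℂ) * z) = r * (Complex.I * conj z) := by
  rw [map_mul, Complex.conj_ofReal]; ring

lemma I_mul_conj_neg_sq_mul (ω z : ℂ) :
    Complex.I * conj (-(ω ^ 2) * z) = -((-conj ω) ^ 2) * (Complex.I * conj z) := by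
  simp only [map_mul, map_neg, map_pow]; ring

lemma intervalIntegral_I_mul_conj (f : ℝ → ℂ) (a b : ℝ) :
    ∫ t in a..b, Complex.I * conj (f t) = Complex.I * conj (∫ t in a..b, f t) := by
  rw [intervalIntegral.integral_const_mul]
  simp only [intervalIntegral, integral_conj, map_sub]

theorem IsNLMode.I_mul_conj {a₁ a₂ : ℝ} {b₁ b₂ : ℝ → ℝ} {ν₁ μ₂ : ℝ} {ω : ℂ} {y g : ℝ → ℂ}
    (h : IsNLMode a₁ a₂ b₁ b₂ ν₁ μ₂ ω y g) :
    IsNLMode a₁ a₂ b₁ b₂ ν₁ μ₂ (-conj ω)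
      (fun x => Complex.I * conj (y x)) (fun x => Complex.I * conj (g x)) := by
  obtain ⟨hy, hg, hint, hy_eq, hg_eq, hbc₁, hbc₂, x₀, hx₀, hy₀⟩ := h
  have hconj : Continuous (fun z : ℂ => Complex.I * conj z) := by fun_prop
  simp only [IsNLMode, chiC_I_mul_conj_sq, ← I_mul_conj_ofReal_mul]
  refine ⟨hconj.comp_continuousOn hy, hconj.comp_continuousOn hg,
    ((Complex.conjCLE : ℂ →L[ℝ] ℂ).integrable_comp hint).const_mul _, ?_, ?_, ?_, ?_,
    ⟨x₀, hx₀, by simp [hy₀]⟩⟩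
  · intro x hx
    rw [intervalIntegral_I_mul_conj, hy_eq x hx, map_add, mul_add]
  · intro x hx
    simp only [mul_assoc, ← I_mul_conj_ofReal_mul, ← I_mul_conj_neg_sq_mul]
    rw [intervalIntegral_I_mul_conj, hg_eq x hx, map_add, mul_add]
    simp only [mul_assoc]
  · rw [hbc₁]
    simp only [map_mul, map_neg, Complex.conj_I, Complex.conj_ofReal]
    ring
  · rw [hbc₂]
    simp only [map_mul, Complex.conj_I]
    ring

theorem stmt16_general (a₁ a₂ : ℝ) (b₁ b₂ : ℝ → ℝ)
    (ν₁ μ₂ : ℝ) :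
    (∀ (ω : ℂ) (y g : ℝ → ℂ), IsNLMode a₁ a₂ b₁ b₂ ν₁ μ₂ ω y g →
      IsNLMode a₁ a₂ b₁ b₂ ν₁ μ₂ (-(starRingEnd ℂ) ω)
        (fun x => Complex.I * (starRingEnd ℂ) (y x))
        (fun x => Complex.I * (starRingEnd ℂ) (g x))) ∧
    (∀ ω : ℂ, (∃ y g : ℝ → ℂ, IsNLMode a₁ a₂ b₁ b₂ ν₁ μ₂ ω y g) →
      ∃ y g : ℝ → ℂ, IsNLMode a₁ a₂ b₁ b₂ ν₁ μ₂ (-(starRingEnd ℂ) ω) y g) :=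
  ⟨fun _ _ _ h => h.I_mul_conj, fun _ ⟨_, _, h⟩ => ⟨_, _, h.I_mul_conj⟩⟩

/-- The nonlinear spectrum is symmetric w.r.t. the imaginary axis: if `ω` is a nonlinear
eigenvalue with eigenfunction `y`, then `-conj ω` is a nonlinear eigenvalue with
eigenfunction `i · conj y` (for `ω = iζ` this is `ω₁ = i conj ζ`, `y₁ = i conj y`). -/
theorem stmt16 (a₁ a₂ : ℝ) (h12 : a₁ < a₂) (b₁ b₂ : ℝ → ℝ)
    (hb1 : ∀ᵐ x ∂(MeasureTheory.volume.restrict (Set.Icc a₁ a₂)), 0 ≤ b₁ x)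
    (hb12 : ∀ᵐ x ∂(MeasureTheory.volume.restrict (Set.Icc a₁ a₂)), b₁ x ≤ b₂ x)
    (ν₁ μ₂ : ℝ) (hν₁ : 0 ≤ ν₁) (hμ₂ : 0 ≤ μ₂) :
    (∀ (ω : ℂ) (y g : ℝ → ℂ), IsNLMode a₁ a₂ b₁ b₂ ν₁ μ₂ ω y g →
      IsNLMode a₁ a₂ b₁ b₂ ν₁ μ₂ (-(starRingEnd ℂ) ω)
        (fun x => Complex.I * (starRingEnd ℂ) (y x))
        (fun x => Complex.I * (starRingEnd ℂ) (g x))) ∧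
    (∀ ω : ℂ, (∃ y g : ℝ → ℂ, IsNLMode a₁ a₂ b₁ b₂ ν₁ μ₂ ω y g) →
      ∃ y g : ℝ → ℂ, IsNLMode a₁ a₂ b₁ b₂ ν₁ μ₂ (-(starRingEnd ℂ) ω) y g) :=
  stmt16_general a₁ a₂ b₁ b₂ ν₁ μ₂
end
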